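/- arXiv:math/0403230 — 10 statements merged into one kernel-verified Lean document; each statement's English description precedes it below -/
import Mathlib

section
/- Let G = B · C be an internal direct product decomposition of a finite group G, and let A be a direct factor of G such that A and B are coprime (no nontrivial direct factor of A is isomorphic to a direct factor of B). Then the projection of A onto C (along B) is a direct factor of G. -/
namespace ProjAux

variable {G : Type*} [Group G]

/-- decomposition w.r.t. two subgroups with normal second factor and sup ⊤ -/
lemma decomp {X Y : Subgroup G} [Y.Normal] (h : X ⊔ Y = ⊤) (g : G) :
    ∃ x ∈ X, ∃ y ∈ Y, g = x * y := by
  have hg : g ∈ ((X ⊔ Y : Subgroup G) : Set G) := by rw [h]; trivial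
  rw [Subgroup.mul_normal] at hg
  obtain ⟨x, hx, y, hy, hxy⟩ := hg
  exact ⟨x, hx, y, hy, hxy.symm⟩

/-- conjugation transfer along commuting subgroups -/
lemma conj_aux {X Y : Subgroup G} (comm : ∀ x ∈ X, ∀ y ∈ Y, Commute x y)
    {g w z : G} (h1 : g * w⁻¹ ∈ X) (h2 : w ∈ Y) (h3 : z ∈ Y) :
    g * z * g⁻¹ = w * z * w⁻¹ := by
  have hc : Commute (g * w⁻¹) (w * z * w⁻¹) :=
    comm _ h1 _ (mul_mem (mul_mem h2 h3) (inv_mem h2))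
  calc g * z * g⁻¹ = (g * w⁻¹) * (w * z * w⁻¹) * (g * w⁻¹)⁻¹ := by group
    _ = (w * z * w⁻¹) * (g * w⁻¹) * (g * w⁻¹)⁻¹ := by rw [hc.eq]
    _ = w * z * w⁻¹ := by group

/-- existence of the projection onto `X` along `Y`. -/
lemma exists_proj (X Y : Subgroup G) (hX : X.Normal) (hY : Y.Normal)
    (hinf : X ⊓ Y = ⊥) (hsup : X ⊔ Y = ⊤) :
    ∃ π : G →* G, (∀ g, π g ∈ X) ∧ (∀ x ∈ X, ∀ y ∈ Y, π (x * y) = x) := by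
  haveI := hX; haveI := hY
  have hdis : Disjoint X Y := disjoint_iff.mpr hinf
  have comm : ∀ (a : X) (b : Y), Commute (X.subtype a) (Y.subtype b) := fun a b =>
    Subgroup.commute_of_normal_of_disjoint X Y hX hY hdis _ _ a.2 b.2
  set φ : X × Y →* G := X.subtype.noncommCoprod Y.subtype comm with hφ
  have hφ_apply : ∀ (v : X × Y), φ v = (v.1 : G) * (v.2 : G) := fun v => rfl
  have hbij : Function.Bijective φ := by
    constructor
    · rw [injective_iff_map_eq_one]
      rintro ⟨x, y⟩ hxy
      rw [hφ_apply] at hxy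
      have hx : (x : G) ∈ X ⊓ Y := by
        constructor
        · exact x.2
        · have : (x : G) = (y : G)⁻¹ := by
            rw [eq_inv_iff_mul_eq_one]; exact hxy
          rw [this]; exact Y.inv_mem y.2
      rw [hinf] at hx
      have hx1 : (x : G) = 1 := hx
      have hy1 : (y : G) = 1 := by
        have := hxy; rw [hx1, one_mul] at this; exact this
      exact Prod.ext (Subtype.ext hx1) (Subtype.ext hy1)
    · intro g
      obtain ⟨x, hx, y, hy, rfl⟩ := decomp hsup g
      exact ⟨(⟨x, hx⟩, ⟨y, hy⟩), rfl⟩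
  set e := MulEquiv.ofBijective φ hbij with he
  refine ⟨X.subtype.comp ((MonoidHom.fst X Y).comp e.symm.toMonoidHom), fun g => ?_, ?_⟩
  · exact ((e.symm g).1 : X).2
  · intro x hx y hy
    have : e (⟨x, hx⟩, ⟨y, hy⟩) = x * y := rfl
    have h2 : e.symm (x * y) = (⟨x, hx⟩, ⟨y, hy⟩) := by
      rw [← this, MulEquiv.symm_apply_apply]
    simp [MonoidHom.comp_apply, h2]

/-- iterates of an endomorphism as monoid homs -/
def pw (f : G →* G) : ℕ → (G →* G)
  | 0 => MonoidHom.id G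
  | (m+1) => f.comp (pw f m)

lemma pw_zero (f : G →* G) (x : G) : pw f 0 x = x := rfl

lemma pw_succ (f : G →* G) (m : ℕ) (x : G) : pw f (m+1) x = f (pw f m x) := rfl

lemma pw_succ' (f : G →* G) (m : ℕ) (x : G) : pw f (m+1) x = pw f m (f x) := by
  induction m with
  | zero => rfl
  | succ k ih =>
    show f (pw f (k+1) x) = pw f (k+1) (f x)
    rw [ih]; rfl

lemma pw_add (f : G →* G) (m k : ℕ) (x : G) : pw f (m + k) x = pw f m (pw f k x) := by
  induction k with
  | zero => rfl
  | succ j ih =>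
    show f (pw f (m+j) x) = pw f m (f (pw f j x))
    rw [ih, ← pw_succ, pw_succ']


lemma ker_mono (f : G →* G) (m : ℕ) : (pw f m).ker ≤ (pw f (m+1)).ker := by
  intro x hx
  have hx' : pw f m x = 1 := hx
  have : pw f (m+1) x = 1 := by rw [pw_succ, hx', map_one]
  exact this

lemma range_anti (f : G →* G) (m : ℕ) : (pw f (m+1)).range ≤ (pw f m).range := by
  rintro y ⟨x, rfl⟩
  exact ⟨f x, (pw_succ' f m x).symm⟩

lemma ker_step (f : G →* G) (m : ℕ) (h : (pw f m).ker = (pw f (m+1)).ker) :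
    (pw f (m+1)).ker = (pw f (m+2)).ker := by
  refine le_antisymm (ker_mono f (m+1)) (fun x hx => ?_)
  have hx' : pw f (m+2) x = 1 := hx
  rw [pw_succ'] at hx'
  have hfx : f x ∈ (pw f (m+1)).ker := hx'
  rw [← h] at hfx
  have : pw f m (f x) = 1 := hfx
  show pw f (m+1) x = 1
  rw [pw_succ']; exact this

lemma range_step (f : G →* G) (m : ℕ) (h : (pw f m).range = (pw f (m+1)).range) :
    (pw f (m+1)).range = (pw f (m+2)).range := by
  refine le_antisymm (fun y hy => ?_) (range_anti f (m+1))
  obtain ⟨x, rfl⟩ := hy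
  have hmem : pw f m x ∈ (pw f m).range := ⟨x, rfl⟩
  rw [h] at hmem
  obtain ⟨z, hz⟩ := hmem
  refine ⟨z, ?_⟩
  rw [pw_succ f (m+1), hz, ← pw_succ]

lemma ker_eventually (f : G →* G) {k : ℕ} (hk : (pw f k).ker = (pw f (k+1)).ker) :
    ∀ m, k ≤ m → (pw f m).ker = (pw f k).ker := by
  have key : ∀ j, (pw f (k+j)).ker = (pw f k).ker ∧ (pw f (k+j)).ker = (pw f (k+j+1)).ker := by
    intro j
    induction j with
    | zero => exact ⟨rfl, hk⟩
    | succ i ih =>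
      refine ⟨ih.2.symm.trans ih.1, ?_⟩
      exact ker_step f (k+i) ih.2
  intro m hm
  have := (key (m - k)).1
  rwa [Nat.add_sub_cancel' hm] at this

lemma range_eventually (f : G →* G) {k : ℕ} (hk : (pw f k).range = (pw f (k+1)).range) :
    ∀ m, k ≤ m → (pw f m).range = (pw f k).range := by
  have key : ∀ j, (pw f (k+j)).range = (pw f k).range ∧
      (pw f (k+j)).range = (pw f (k+j+1)).range := by
    intro j
    induction j with
    | zero => exact ⟨rfl, hk⟩
    | succ i ih =>
      refine ⟨ih.2.symm.trans ih.1, ?_⟩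
      exact range_step f (k+i) ih.2
  intro m hm
  have := (key (m - k)).1
  rwa [Nat.add_sub_cancel' hm] at this

lemma exists_ker_stab [Finite G] (f : G →* G) : ∃ k, (pw f k).ker = (pw f (k+1)).ker := by
  by_contra h
  push_neg at h
  have hlt : ∀ k, (pw f k).ker < (pw f (k+1)).ker := fun k =>
    lt_of_le_of_ne (ker_mono f k) (h k)
  have hcard : ∀ k, (((pw f k).ker : Set G)).ncard < (((pw f (k+1)).ker : Set G)).ncard := by
    intro k
    exact Set.ncard_lt_ncard (SetLike.coe_ssubset_coe.mpr (hlt k)) (Set.toFinite _)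
  have hge : ∀ k, k ≤ (((pw f k).ker : Set G)).ncard := by
    intro k
    induction k with
    | zero => exact Nat.zero_le _
    | succ j ih => exact Nat.succ_le_of_lt (lt_of_le_of_lt ih (hcard j))
  have hle : ∀ k, (((pw f k).ker : Set G)).ncard ≤ (Set.univ : Set G).ncard := fun k =>
    Set.ncard_le_ncard (Set.subset_univ _) (Set.toFinite _)
  have h1 := hge ((Set.univ : Set G).ncard + 1)
  have h2 := hle ((Set.univ : Set G).ncard + 1)
  omega

lemma exists_range_stab [Finite G] (f : G →* G) : ∃ k, (pw f k).range = (pw f (k+1)).range := by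
  by_contra h
  push_neg at h
  have hlt : ∀ k, (pw f (k+1)).range < (pw f k).range := fun k =>
    lt_of_le_of_ne (range_anti f k) (fun e => h k e.symm)
  have hcard : ∀ k, (((pw f (k+1)).range : Set G)).ncard < (((pw f k).range : Set G)).ncard := by
    intro k
    exact Set.ncard_lt_ncard (SetLike.coe_ssubset_coe.mpr (hlt k)) (Set.toFinite _)
  have hge : ∀ k, (((pw f k).range : Set G)).ncard + k ≤ (((pw f 0).range : Set G)).ncard := by
    intro k
    induction k with
    | zero => omega
    | succ j ih =>
      have := hcard j
      omega
  have h1 := hge ((((pw f 0).range : Set G)).ncard + 1)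
  omega

lemma exists_good_n [Finite G] (f : G →* G) :
    ∃ n, 1 ≤ n ∧ (pw f (n+n)).ker = (pw f n).ker ∧ (pw f (n+n)).range = (pw f n).range := by
  obtain ⟨kk, hkk⟩ := exists_ker_stab f
  obtain ⟨kr, hkr⟩ := exists_range_stab f
  refine ⟨max kk kr + 1, Nat.le_add_left 1 _, ?_, ?_⟩
  · have h1 := ker_eventually f hkk (max kk kr + 1) (by omega)
    have h2 := ker_eventually f hkk ((max kk kr + 1) + (max kk kr + 1)) (by omega)
    rw [h1, h2]
  · have h1 := range_eventually f hkr (max kk kr + 1) (by omega)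
    have h2 := range_eventually f hkr ((max kk kr + 1) + (max kk kr + 1)) (by omega)
    rw [h1, h2]

end ProjAux


/-- `A` is a direct factor of `G`: there is a normal complement. -/
def Subgroup.IsDirectFactor {G : Type*} [Group G] (A : Subgroup G) : Prop :=
  A.Normal ∧ ∃ U : Subgroup G, U.Normal ∧ A ⊓ U = ⊥ ∧ A ⊔ U = ⊤

/-- Two groups are coprime: no nontrivial direct factor of one is isomorphic
to a direct factor of the other. -/
def GroupCoprime (A B : Type*) [Group A] [Group B] : Prop :=
  ∀ (A₁ : Subgroup A) (B₁ : Subgroup B),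
    A₁.IsDirectFactor → B₁.IsDirectFactor → Nonempty (A₁ ≃* B₁) → A₁ = ⊥

theorem projection_of_coprime_direct_factor
    {G : Type*} [Group G] [Finite G] (B C : Subgroup G)
    (hB : B.Normal) (hC : C.Normal) (hBC : B ⊓ C = ⊥) (hsup : B ⊔ C = ⊤)
    (p : G →* G) (hpC : ∀ g, p g ∈ C)
    (hp : ∀ b ∈ B, ∀ c ∈ C, p (b * c) = c)
    (A : Subgroup G) (hA : A.IsDirectFactor) (hcop : GroupCoprime A B) :
    (A.map p).IsDirectFactor := by
  classical
  obtain ⟨hAnorm, U, hUnorm, hAU, hAUsup⟩ := hA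
  haveI := hB; haveI := hC; haveI := hAnorm; haveI := hUnorm
  have hBCcomm : ∀ b ∈ B, ∀ c ∈ C, Commute b c := fun b hb c hc =>
    Subgroup.commute_of_normal_of_disjoint B C hB hC (disjoint_iff.mpr hBC) b c hb hc
  have hAUcomm : ∀ a ∈ A, ∀ u ∈ U, Commute a u := fun a ha u hu =>
    Subgroup.commute_of_normal_of_disjoint A U hAnorm hUnorm (disjoint_iff.mpr hAU) a u ha hu
  obtain ⟨π, hπmem, hπeq⟩ := ProjAux.exists_proj A U hAnorm hUnorm hAU hAUsup
  have hπ_id : ∀ a ∈ A, π a = a := fun a ha => by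
    have := hπeq a ha 1 (one_mem U); rwa [mul_one] at this
  have hπ_one : ∀ u ∈ U, π u = 1 := fun u hu => by
    have := hπeq 1 (one_mem A) u hu; rwa [one_mul] at this
  have hπdec : ∀ g, (π g)⁻¹ * g ∈ U := by
    intro g
    obtain ⟨a, ha, u, hu, rfl⟩ := ProjAux.decomp hAUsup g
    rw [hπeq a ha u hu]
    have : a⁻¹ * (a * u) = u := by group
    rw [this]; exact hu
  have hq_mem : ∀ g, g * (p g)⁻¹ ∈ B := by
    intro g
    obtain ⟨b, hb, c, hc, rfl⟩ := ProjAux.decomp hsup g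
    rw [hp b hb c hc]
    have : b * c * c⁻¹ = b := by group
    rw [this]; exact hb
  have hqmul : ∀ x y : G, (x*y) * (p (x*y))⁻¹ = (x * (p x)⁻¹) * (y * (p y)⁻¹) := by
    intro x y
    have hc : Commute (y * (p y)⁻¹) ((p x)⁻¹) :=
      hBCcomm _ (hq_mem y) _ (C.inv_mem (hpC x))
    calc (x*y) * (p (x*y))⁻¹ = x * ((y * (p y)⁻¹) * (p x)⁻¹) := by rw [map_mul]; group
      _ = x * ((p x)⁻¹ * (y * (p y)⁻¹)) := by rw [hc.eq]
      _ = (x * (p x)⁻¹) * (y * (p y)⁻¹) := by group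
  set q : G →* G := MonoidHom.mk' (fun g => g * (p g)⁻¹) hqmul with hqdef
  have hq_apply : ∀ g, q g = g * (p g)⁻¹ := fun g => rfl
  have hqp : ∀ g, q g * p g = g := fun g => by rw [hq_apply]; group
  have hqB : ∀ g, q g ∈ B := fun g => hq_mem g
  have hpnorm : ∀ g x, p (g * x * g⁻¹) = g * p x * g⁻¹ := by
    intro g x
    have h1 : p (g * x * g⁻¹) = p g * p x * (p g)⁻¹ := by
      rw [map_mul, map_mul, map_inv]
    exact h1.trans (ProjAux.conj_aux hBCcomm (hq_mem g) (hpC g) (hpC x)).symm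
  have hπU : ∀ g, g * (π g)⁻¹ ∈ U := by
    intro g
    have h := hUnorm.conj_mem _ (hπdec g) (π g)
    have he : π g * ((π g)⁻¹ * g) * (π g)⁻¹ = g * (π g)⁻¹ := by group
    rwa [he] at h
  have hUAcomm : ∀ u ∈ U, ∀ a ∈ A, Commute u a := fun u hu a ha => (hAUcomm a ha u hu).symm
  have hπnorm : ∀ g x, π (g * x * g⁻¹) = g * π x * g⁻¹ := by
    intro g x
    have h1 : π (g * x * g⁻¹) = π g * π x * (π g)⁻¹ := by
      rw [map_mul, map_mul, map_inv]
    exact h1.trans (ProjAux.conj_aux hUAcomm (hπU g) (hπmem g) (hπmem x)).symm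
  set H : G →* G := π.comp p with hHdef
  have hH_apply : ∀ g, H g = π (p g) := fun g => rfl
  have hHmem : ∀ g, H g ∈ A := fun g => hπmem _
  have hHnorm : ∀ g x, H (g * x * g⁻¹) = g * H x * g⁻¹ := fun g x => by
    rw [hH_apply, hpnorm, hπnorm, hH_apply]
  have hpwnorm : ∀ m g x, ProjAux.pw H m (g * x * g⁻¹) = g * ProjAux.pw H m x * g⁻¹ := by
    intro m
    induction m with
    | zero => intro g x; rfl
    | succ j ih =>
      intro g x
      rw [ProjAux.pw_succ, ih, hHnorm, ProjAux.pw_succ]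
  obtain ⟨n, hn1, hker2n, hrange2n⟩ := ProjAux.exists_good_n H
  have hIA : ∀ x, ProjAux.pw H n x ∈ A := by
    intro x
    obtain ⟨m, hm⟩ : ∃ m, n = m + 1 := ⟨n - 1, by omega⟩
    rw [hm, ProjAux.pw_succ]
    exact hHmem _
  have hkerH : ∀ x, H x = 1 → ProjAux.pw H n x = 1 := by
    intro x hx
    obtain ⟨m, hm⟩ : ∃ m, n = m + 1 := ⟨n - 1, by omega⟩
    rw [hm, ProjAux.pw_succ', hx, map_one]
  have hIK : ∀ x, x ∈ (ProjAux.pw H n).range → ProjAux.pw H n x = 1 → x = 1 := by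
    rintro x ⟨y, rfl⟩ hx
    have h1 : y ∈ (ProjAux.pw H (n+n)).ker := by
      show ProjAux.pw H (n+n) y = 1
      rw [ProjAux.pw_add]; exact hx
    rw [hker2n] at h1
    exact h1
  have hdecompIK : ∀ x, ∃ z, ProjAux.pw H n (ProjAux.pw H n z) = ProjAux.pw H n x := by
    intro x
    have hx : ProjAux.pw H n x ∈ (ProjAux.pw H n).range := ⟨x, rfl⟩
    rw [← hrange2n] at hx
    obtain ⟨z, hz⟩ := hx
    refine ⟨z, ?_⟩
    rw [← ProjAux.pw_add]; exact hz
  set A2 : Subgroup G := A ⊓ (ProjAux.pw H n).ker with hA2def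
  have hA2mem : ∀ x, x ∈ A2 ↔ x ∈ A ∧ ProjAux.pw H n x = 1 := fun x => Iff.rfl
  have hHA2 : ∀ a ∈ A2, H a ∈ A2 := by
    intro a ha
    refine ⟨hHmem a, ?_⟩
    show ProjAux.pw H n (H a) = 1
    rw [← ProjAux.pw_succ', ProjAux.pw_succ, ((hA2mem a).mp ha).2, map_one]
  have hfixK : ∀ a, ProjAux.pw H n a = 1 → H a = a → a = 1 := by
    intro a h1 h2
    have key : ∀ m, ProjAux.pw H m a = a := by
      intro m
      induction m with
      | zero => rfl
      | succ j ih => rw [ProjAux.pw_succ', h2, ih]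
    rw [← key n, h1]
  have hqinjA2 : ∀ a ∈ A2, q a = 1 → a = 1 := by
    intro a ha hqa
    have hpa : p a = a := by
      have : a * (p a)⁻¹ = 1 := hqa
      exact (mul_inv_eq_one.mp this).symm
    have hHa : H a = a := by rw [hH_apply, hpa]; exact hπ_id a ((hA2mem a).mp ha).1
    exact hfixK a ((hA2mem a).mp ha).2 hHa
  have hdecompA : ∀ a ∈ A, ∃ y k, y ∈ (ProjAux.pw H n).range ∧ k ∈ A2 ∧ a = y * k := by
    intro a ha
    obtain ⟨z, hz⟩ := hdecompIK a
    refine ⟨ProjAux.pw H n z, (ProjAux.pw H n z)⁻¹ * a, ⟨z, rfl⟩, ⟨?_, ?_⟩, by group⟩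
    · exact A.mul_mem (A.inv_mem (hIA z)) ha
    · show ProjAux.pw H n (_ * a) = 1
      rw [map_mul, map_inv, hz]
      group
  -- the S-induction
  have hA2S : ∀ m a, a ∈ A2 → ProjAux.pw H m a = 1 → a ∈ (A2.map q) ⊔ U := by
    intro m
    induction m with
    | zero =>
      intro a _ h
      have : a = 1 := h
      rw [this]; exact one_mem _
    | succ j ih =>
      intro a ha hpa
      have h2 : ProjAux.pw H j (H a) = 1 := by rw [← ProjAux.pw_succ']; exact hpa
      have h3 : H a ∈ (A2.map q) ⊔ U := ih (H a) (hHA2 a ha) h2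
      have hu : (π (p a))⁻¹ * p a ∈ U := hπdec (p a)
      have haeq : a = q a * (H a * ((π (p a))⁻¹ * p a)) := by
        show a = a * (p a)⁻¹ * (π (p a) * ((π (p a))⁻¹ * p a))
        group
      rw [haeq]
      exact mul_mem ((le_sup_left : A2.map q ≤ _) (Subgroup.mem_map_of_mem q ha))
        (mul_mem h3 ((le_sup_right : U ≤ _) hu))
  have hA2leS : ∀ a ∈ A2, a ∈ (A2.map q) ⊔ U := fun a ha =>
    hA2S n a ha ((hA2mem a).mp ha).2
  have hInorm : (ProjAux.pw H n).range.Normal := by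
    constructor
    rintro x ⟨y, rfl⟩ g
    exact ⟨g * y * g⁻¹, hpwnorm n g y⟩
  haveI := hInorm
  set W : Subgroup G := (ProjAux.pw H n).range ⊔ U with hWdef
  haveI hWnorm : W.Normal := Subgroup.sup_normal _ _
  have hqnorm : ∀ g x, q (g * x * g⁻¹) = g * q x * g⁻¹ := by
    intro g x
    rw [hq_apply, hq_apply, hpnorm]
    group
  haveI hA2norm : A2.Normal := Subgroup.normal_inf_normal A (ProjAux.pw H n).ker
  have hqA2norm : (A2.map q).Normal := by
    constructor
    rintro x ⟨a, ha, rfl⟩ g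
    exact ⟨g * a * g⁻¹, hA2norm.conj_mem a ha g, hqnorm g a⟩
  have hqA2W : ∀ x ∈ A2.map q, x ∈ W → x = 1 := by
    rintro x ⟨a, ha, rfl⟩ hxW
    have hxW' : q a ∈ ((((ProjAux.pw H n).range) ⊔ U : Subgroup G) : Set G) := hxW
    rw [Subgroup.mul_normal] at hxW'
    obtain ⟨i, hi, u, hu, hiu0⟩ := hxW'
    have hiu : i * u = q a := hiu0
    have hiA : i ∈ A := by
      obtain ⟨z, rfl⟩ := hi
      exact hIA z
    have hu' : (π (p a))⁻¹ * p a ∈ U := hπdec (p a)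
    have hpa : p a = H a * ((π (p a))⁻¹ * p a) := by
      show p a = π (p a) * ((π (p a))⁻¹ * p a)
      group
    have h0 : i * u = a * (((π (p a))⁻¹ * p a)⁻¹ * (H a)⁻¹) := by
      rw [hiu, hq_apply, hH_apply]
      group
    have hcom : Commute (((π (p a))⁻¹ * p a)⁻¹) ((H a)⁻¹) :=
      ((hAUcomm (H a) (hHmem a) _ hu').inv_inv).symm
    have key : u * ((π (p a))⁻¹ * p a) = i⁻¹ * (a * (H a)⁻¹) := by
      calc u * ((π (p a))⁻¹ * p a)
          = i⁻¹ * (i * u) * ((π (p a))⁻¹ * p a) := by group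
        _ = i⁻¹ * (a * (((π (p a))⁻¹ * p a)⁻¹ * (H a)⁻¹)) * ((π (p a))⁻¹ * p a) := by rw [h0]
        _ = i⁻¹ * (a * ((H a)⁻¹ * ((π (p a))⁻¹ * p a)⁻¹)) * ((π (p a))⁻¹ * p a) := by
            rw [hcom.eq]
        _ = i⁻¹ * (a * (H a)⁻¹) := by group
    have hmemA : i⁻¹ * (a * (H a)⁻¹) ∈ A :=
      A.mul_mem (A.inv_mem hiA)
        (A.mul_mem ((hA2mem a).mp ha).1 (A.inv_mem (hHmem a)))
    have hmemU : i⁻¹ * (a * (H a)⁻¹) ∈ U := by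
      rw [← key]; exact U.mul_mem hu hu'
    have hb : i⁻¹ * (a * (H a)⁻¹) = 1 := by
      have : i⁻¹ * (a * (H a)⁻¹) ∈ A ⊓ U := ⟨hmemA, hmemU⟩
      rw [hAU] at this
      exact this
    have haHaI : a * (H a)⁻¹ = i := (inv_mul_eq_one.mp hb).symm
    have haHa2 : a * (H a)⁻¹ ∈ A2 := A2.mul_mem ha (A2.inv_mem (hHA2 a ha))
    have hfix1 : a * (H a)⁻¹ = 1 := by
      refine hIK _ ?_ ((hA2mem _).mp haHa2).2
      rw [haHaI]; exact hi
    have hHa : H a = a := (mul_inv_eq_one.mp hfix1).symm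
    have ha1 : a = 1 := hfixK a ((hA2mem a).mp ha).2 hHa
    rw [ha1, map_one]
  have hA2qB : A2.map q ≤ B := by
    rintro x ⟨a, _, rfl⟩
    exact hqB a
  have hGsup : (A2.map q) ⊔ W = ⊤ := by
    rw [eq_top_iff, ← hAUsup]
    refine sup_le ?_ ?_
    · intro a ha
      obtain ⟨y, k, hy, hk, rfl⟩ := hdecompA a ha
      refine mul_mem ((le_sup_right : W ≤ _) ((le_sup_left : (ProjAux.pw H n).range ≤ W) hy)) ?_
      have := hA2leS k hk
      have hle : (A2.map q) ⊔ U ≤ (A2.map q) ⊔ W :=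
        sup_le le_sup_left (le_trans (le_sup_right : U ≤ W) le_sup_right)
      exact hle this
    · exact le_trans (le_sup_right : U ≤ W) le_sup_right
  -- direct factor of B
  haveI hBWnorm : (B ⊓ W).Normal := Subgroup.normal_inf_normal B W
  have dfB : ((A2.map q).subgroupOf B).IsDirectFactor := by
    refine ⟨hqA2norm.subgroupOf B, (B ⊓ W).subgroupOf B, hBWnorm.subgroupOf B, ?_, ?_⟩
    · rw [eq_bot_iff]
      intro x hx
      have hx1 : (x : G) ∈ Subgroup.map q A2 := hx.1
      have hx2 : (x : G) ∈ B ⊓ W := hx.2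
      have : (x : G) = 1 := hqA2W _ hx1 hx2.2
      exact Subgroup.mem_bot.mpr (Subtype.ext this)
    · rw [eq_top_iff]
      rintro ⟨b, hb⟩ -
      have hbmem : b ∈ (((A2.map q) ⊔ W : Subgroup G) : Set G) := by
        rw [hGsup]; trivial
      rw [Subgroup.mul_normal] at hbmem
      obtain ⟨d, hd, w, hw, hdw⟩ := hbmem
      have hdB : d ∈ B := hA2qB hd
      have hwB : w ∈ B := by
        have hw' : w = d⁻¹ * b := by rw [← hdw]; group
        rw [hw']
        exact B.mul_mem (B.inv_mem hdB) hb
      have heq : (⟨b, hb⟩ : B) = ⟨d, hdB⟩ * ⟨w, hwB⟩ := by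
        ext; exact hdw.symm
      rw [heq]
      exact Subgroup.mul_mem_sup (Subgroup.mem_subgroupOf.mpr hd)
        (Subgroup.mem_subgroupOf.mpr ⟨hwB, hw⟩)
  -- direct factor of A
  have dfA : (A2.subgroupOf A).IsDirectFactor := by
    refine ⟨hA2norm.subgroupOf A, ((ProjAux.pw H n).range).subgroupOf A,
      hInorm.subgroupOf A, ?_, ?_⟩
    · rw [eq_bot_iff]
      intro x hx
      have hx1 : (x : G) ∈ A2 := hx.1
      have hx2 : (x : G) ∈ (ProjAux.pw H n).range := hx.2
      have : (x : G) = 1 := hIK _ hx2 ((hA2mem _).mp hx1).2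
      exact Subgroup.mem_bot.mpr (Subtype.ext this)
    · rw [eq_top_iff]
      rintro ⟨a, ha⟩ -
      obtain ⟨y, k, hy, hk, hyk⟩ := hdecompA a ha
      have hyA : y ∈ A := by
        obtain ⟨z, rfl⟩ := hy
        exact hIA z
      have hkA : k ∈ A := ((hA2mem k).mp hk).1
      have heq : (⟨a, ha⟩ : A) = ⟨y, hyA⟩ * ⟨k, hkA⟩ := by
        ext; exact hyk
      rw [heq, sup_comm]
      exact Subgroup.mul_mem_sup (Subgroup.mem_subgroupOf.mpr hy)
        (Subgroup.mem_subgroupOf.mpr hk)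
  -- the isomorphism
  have hA2leA : A2 ≤ A := inf_le_left
  have e2 : A2 ≃* (A2.map q) := by
    refine MulEquiv.ofBijective ((q.comp A2.subtype).codRestrict (A2.map q)
      (fun x => Subgroup.mem_map_of_mem q x.2)) ⟨?_, ?_⟩
    · rw [injective_iff_map_eq_one]
      intro x hx
      have hx' : q (x : G) = 1 := congrArg Subtype.val hx
      exact Subtype.ext (hqinjA2 _ x.2 hx')
    · rintro ⟨y, hy⟩
      obtain ⟨a, ha, rfl⟩ := hy
      exact ⟨⟨a, ha⟩, rfl⟩
  have e : (A2.subgroupOf A) ≃* ((A2.map q).subgroupOf B) :=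
    (Subgroup.subgroupOfEquivOfLe hA2leA).trans
      (e2.trans (Subgroup.subgroupOfEquivOfLe hA2qB).symm)
  have hbot := hcop _ _ dfA dfB ⟨e⟩
  have hA2bot : A2 = ⊥ := by
    have hdis : Disjoint A2 A := Subgroup.subgroupOf_eq_bot.mp hbot
    have hle : A2 ≤ ⊥ := fun x hx => hdis.le_bot ⟨hx, hA2leA hx⟩
    exact le_bot_iff.mp hle
  -- wrap up
  have hHinj : ∀ a ∈ A, H a = 1 → a = 1 := by
    intro a ha h1
    have : a ∈ A2 := ⟨ha, hkerH a h1⟩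
    rw [hA2bot] at this
    exact this
  have hmapnorm : (A.map p).Normal := by
    constructor
    rintro x ⟨a, ha, rfl⟩ g
    exact ⟨g * a * g⁻¹, hAnorm.conj_mem a ha g, hpnorm g a⟩
  refine ⟨hmapnorm, U, hUnorm, ?_, ?_⟩
  · rw [eq_bot_iff]
    rintro x ⟨hx1, hx2⟩
    obtain ⟨a, ha, rfl⟩ := hx1
    have hH1 : H a = 1 := by
      rw [hH_apply]
      exact hπ_one _ hx2
    have : a = 1 := hHinj a ha hH1
    rw [this, map_one]
    exact Subgroup.mem_bot.mpr rfl
  · -- surjectivity of H on A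
    have hinj : Function.Injective (fun x : A => (⟨H (x : G), hHmem _⟩ : A)) := by
      intro x y hxy
      have hxy' : H (x : G) = H (y : G) := congrArg Subtype.val hxy
      have h1 : H ((x : G) * (y : G)⁻¹) = 1 := by
        rw [map_mul, map_inv, hxy']
        group
      have h2 : (x : G) * (y : G)⁻¹ = 1 :=
        hHinj _ (A.mul_mem x.2 (A.inv_mem y.2)) h1
      exact Subtype.ext (mul_inv_eq_one.mp h2)
    have hsurj := Finite.injective_iff_surjective.mp hinj
    rw [eq_top_iff, ← hAUsup]
    refine sup_le ?_ le_sup_right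
    intro a ha
    obtain ⟨⟨a', ha'⟩, hE⟩ := hsurj ⟨a, ha⟩
    have hHa' : H a' = a := congrArg Subtype.val hE
    have hu : (π (p a'))⁻¹ * p a' ∈ U := hπdec (p a')
    have haeq : a = p a' * ((π (p a'))⁻¹ * p a')⁻¹ := by
      have h1 : p a' * ((π (p a'))⁻¹ * p a')⁻¹ = π (p a') := by group
      rw [h1, ← hH_apply, hHa']
    rw [haeq]
    exact mul_mem ((le_sup_left : A.map p ≤ _) (Subgroup.mem_map_of_mem p ha'))
      ((le_sup_right : U ≤ _) (U.inv_mem hu))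
end

section
/- Let D be a directly decomposable normal subgroup of a finite group G. For every decomposition G = H₁ ⋯ H_m of G into (internal) direct factors, D = (H₁ ∩ D) ⋯ (H_m ∩ D), and G/D decomposes as the internal direct product of the subgroups (H_i·D)/D. -/
open scoped Pointwise

/-- `D` is directly decomposable in `G`: for every internal direct product
decomposition `G = H·K`, `D = (H ∩ D)·(K ∩ D)`. -/
def Subgroup.DirectlyDecomposable {G : Type*} [Group G] (D : Subgroup G) : Prop :=
  ∀ H K : Subgroup G, H.Normal → K.Normal → H ⊓ K = ⊥ → H ⊔ K = ⊤ →
    ((H ⊓ D : Subgroup G) : Set G) * ((K ⊓ D : Subgroup G) : Set G) = (D : Set G)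

private lemma normal_iSup_aux {G : Type*} [Group G] {ι : Sort*} (K : ι → Subgroup G)
    (h : ∀ i, (K i).Normal) : (⨆ i, K i).Normal := by
  constructor
  intro n hn g
  refine Subgroup.iSup_induction K (C := fun x => g * x * g⁻¹ ∈ ⨆ i, K i) hn
    (fun i x hx => ?_) ?_ (fun x y hx hy => ?_)
  · exact le_iSup K i ((h i).conj_mem x hx g)
  · simpa using Subgroup.one_mem _
  · show g * (x * y) * g⁻¹ ∈ ⨆ i, K i
    have : g * (x * y) * g⁻¹ = (g * x * g⁻¹) * (g * y * g⁻¹) := by group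
    rw [this]; exact mul_mem hx hy

/-- Dedekind modular law, when `B` is normal. -/
private lemma mod_law {G : Type*} [Group G] {A B C : Subgroup G} (hB : B.Normal)
    (h : A ≤ C) : (A ⊔ B) ⊓ C = A ⊔ (B ⊓ C) := by
  apply le_antisymm
  · intro x hx
    rw [Subgroup.mem_inf] at hx
    obtain ⟨hx1, hx2⟩ := hx
    rw [← SetLike.mem_coe, Subgroup.mul_normal] at hx1
    obtain ⟨a, ha, b, hb, rfl⟩ := hx1
    have hbC : b ∈ C := by
      have : a⁻¹ * (a * b) ∈ C := mul_mem (inv_mem (h ha)) hx2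
      simpa using this
    exact mul_mem (Subgroup.mem_sup_left ha) (Subgroup.mem_sup_right ⟨hb, hbC⟩)
  · exact sup_le (le_inf le_sup_left h) (le_inf (inf_le_left.trans le_sup_right) inf_le_right)

theorem directlyDecomposable_multi
    {G : Type*} [Group G] [Finite G] (D : Subgroup G) [D.Normal]
    (hD : D.DirectlyDecomposable)
    (m : ℕ) (H : Fin m → Subgroup G)
    (hnorm : ∀ i, (H i).Normal)
    (hsup : (⨆ i, H i) = ⊤)
    (hind : ∀ i, H i ⊓ (⨆ j ∈ ({i}ᶜ : Set (Fin m)), H j) = ⊥) :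
    (⨆ i, (H i ⊓ D)) = D ∧
      (⨆ i, (H i).map (QuotientGroup.mk' D)) = ⊤ ∧
      ∀ i, (H i).map (QuotientGroup.mk' D) ⊓
          (⨆ j ∈ ({i}ᶜ : Set (Fin m)), (H j).map (QuotientGroup.mk' D)) = ⊥ := by
  classical
  set Kc : Fin m → Subgroup G := fun i => ⨆ j ∈ ({i}ᶜ : Set (Fin m)), H j with hKc
  have hKnorm : ∀ i, (Kc i).Normal := by
    intro i
    rw [hKc]
    simp only [iSup_subtype']
    exact normal_iSup_aux _ (fun j => hnorm j)
  have hsup' : ∀ i, H i ⊔ Kc i = ⊤ := by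
    intro i
    rw [eq_top_iff, ← hsup]
    refine iSup_le fun j => ?_
    by_cases hj : j = i
    · subst hj; exact le_sup_left
    · exact le_trans (le_iSup₂ (f := fun j (_ : j ∈ ({i}ᶜ : Set (Fin m))) => H j) j hj)
        le_sup_right
  have hDset : ∀ i, ((H i ⊓ D : Subgroup G) : Set G) * ((Kc i ⊓ D : Subgroup G) : Set G)
      = (D : Set G) := fun i => hD (H i) (Kc i) (hnorm i) (hKnorm i) (hind i) (hsup' i)
  have hDsplit : ∀ i, (H i ⊓ D) ⊔ (Kc i ⊓ D) = D := by
    intro i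
    haveI := hKnorm i
    haveI : (Kc i ⊓ D).Normal := Subgroup.normal_inf_normal _ _
    apply SetLike.coe_injective
    rw [Subgroup.mul_normal]
    exact hDset i
  have key : ∀ s : Finset (Fin m), D ⊓ (⨆ i ∈ s, H i) = ⨆ i ∈ s, (H i ⊓ D) := by
    intro s
    induction s using Finset.induction_on with
    | empty => simp
    | @insert a t ha ih =>
      rw [Finset.iSup_insert, Finset.iSup_insert]
      set B : Subgroup G := ⨆ i ∈ t, H i with hB
      have hBle : B ≤ Kc a := by
        rw [hB, hKc]
        exact iSup₂_le fun j hj => le_iSup₂ (f := fun j (_ : j ∈ ({a}ᶜ : Set (Fin m))) => H j)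
          j (fun h => ha (h ▸ hj))
      haveI := hKnorm a
      haveI : (Kc a ⊓ D).Normal := Subgroup.normal_inf_normal _ _
      have step1 : D ⊓ (H a ⊔ B) = (H a ⊓ D) ⊔ ((Kc a ⊓ D) ⊓ (H a ⊔ B)) := by
        conv_lhs => rw [← hDsplit a]
        exact mod_law this (inf_le_left.trans le_sup_left)
      have step2 : Kc a ⊓ (H a ⊔ B) = B := by
        rw [inf_comm, sup_comm]
        rw [mod_law (hnorm a) hBle, hind a, sup_bot_eq]
      have step3 : (Kc a ⊓ D) ⊓ (H a ⊔ B) = D ⊓ B := by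
        rw [inf_comm (Kc a) D, inf_assoc, step2]
      rw [step1, step3, ih]
  have p1 : (⨆ i, (H i ⊓ D)) = D := by
    have h1 := key Finset.univ
    have h2 : (⨆ i ∈ (Finset.univ : Finset (Fin m)), H i) = ⨆ i, H i := by
      simp
    have h3 : (⨆ i ∈ (Finset.univ : Finset (Fin m)), (H i ⊓ D)) = ⨆ i, (H i ⊓ D) := by
      simp
    rw [h2, hsup, h3, inf_top_eq] at h1
    exact h1.symm
  refine ⟨p1, ?_, ?_⟩
  · rw [← Subgroup.map_iSup, hsup]
    exact Subgroup.map_top_of_surjective _ (QuotientGroup.mk'_surjective D)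
  · intro i
    rw [eq_bot_iff]
    rintro x ⟨hx1, hx2⟩
    have hx2' : x ∈ (Kc i).map (QuotientGroup.mk' D) := by
      rw [hKc]
      simp only [iSup_subtype'] at hx2 ⊢
      rwa [Subgroup.map_iSup]
    obtain ⟨h, hh, rfl⟩ := hx1
    obtain ⟨k, hk, hkx⟩ := hx2'
    have hh : h ∈ H i := hh
    have hk : k ∈ Kc i := hk
    have hker : h * k⁻¹ ∈ D := by
      have : QuotientGroup.mk' D (h * k⁻¹) = 1 := by
        rw [map_mul, map_inv, ← hkx]
        simp
      rwa [← QuotientGroup.ker_mk' D, MonoidHom.mem_ker]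
    have := hDset i
    have hmem : h * k⁻¹ ∈ ((H i ⊓ D : Subgroup G) : Set G) * ((Kc i ⊓ D : Subgroup G) : Set G) := by
      rw [this]; exact hker
    obtain ⟨a, ha, b, hb, hab⟩ := hmem
    simp only [SetLike.mem_coe] at ha hb
    obtain ⟨ha1, ha2⟩ := Subgroup.mem_inf.mp ha
    obtain ⟨hb1, hb2⟩ := Subgroup.mem_inf.mp hb
    have hab' : a * b = h * k⁻¹ := hab
    have hh2 : a * b * k = h := by rw [hab']; group
    have hbot : a⁻¹ * h ∈ H i ⊓ Kc i := by
      refine Subgroup.mem_inf.mpr ⟨?_, ?_⟩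
      · exact mul_mem (inv_mem ha1) hh
      · have : a⁻¹ * h = b * k := by rw [← hh2]; group
        rw [this]
        exact mul_mem hb1 hk
    rw [hind i, Subgroup.mem_bot] at hbot
    have hha : h = a := by
      have := congrArg (fun y => a * y) hbot
      simpa [mul_assoc] using this
    rw [Subgroup.mem_bot]
    show QuotientGroup.mk' D h = 1
    rw [← MonoidHom.mem_ker, QuotientGroup.ker_mk']
    rw [hha]
    exact ha2
end

section
/- Let T be a normal subgroup of a finite group G such that T' = T ∩ G'. Then T' is directly decomposable in G, i.e., for every internal direct product decomposition G = L·M one has T' = (T' ∩ L)·(T' ∩ M). -/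
/-!
As `T` is normal, `⁅G, T⁆ ≤ T ⊓ G' = T'`, so `T' = ⁅G, T⁆ = ⁅L, T⁆ ⊔ ⁅M, T⁆` whenever `G = L ⊔ M`
with `L`, `M` normal; and `⁅L, T⁆ ≤ T' ⊓ L`, `⁅M, T⁆ ≤ T' ⊓ M`.
-/

open scoped Pointwise

namespace Subgroup

variable {G : Type*} [Group G]

theorem commutator_sup_left (H₁ H₂ K : Subgroup G) [H₂.Normal] [K.Normal] :
    ⁅H₁ ⊔ H₂, K⁆ = ⁅H₁, K⁆ ⊔ ⁅H₂, K⁆ := by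
  refine le_antisymm ?_ (sup_le (commutator_mono le_sup_left le_rfl)
    (commutator_mono le_sup_right le_rfl))
  rw [commutator_le]
  intro g hg k hk
  obtain ⟨a, ha, b, hb, rfl⟩ := mem_sup_of_normal_right.mp hg
  rw [commutatorElement_mul_left_eq_conj_mul]
  exact mul_mem
    (mem_sup_right ((commutator_normal H₂ K).conj_mem _ (commutator_mem_commutator hb hk) a))
    (mem_sup_left (commutator_mem_commutator ha hk))

theorem commutator_top_left_eq_of_commutator_eq_inf {T : Subgroup G} [T.Normal]
    (hT' : ⁅T, T⁆ = T ⊓ _root_.commutator G) : ⁅(⊤ : Subgroup G), T⁆ = ⁅T, T⁆ :=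
  le_antisymm
    (hT' ▸ le_inf (commutator_le_right ⊤ T) (commutator_mono le_rfl le_top))
    (commutator_mono le_top le_rfl)

end Subgroup

theorem derived_of_normal_directlyDecomposable_general
    {G : Type*} [Group G] (T : Subgroup G) (hT : T.Normal)
    (hT' : ⁅T, T⁆ = T ⊓ commutator G) :
    ∀ L M : Subgroup G, L.Normal → M.Normal → L ⊓ M = ⊥ → L ⊔ M = ⊤ →
      (((⁅T, T⁆ : Subgroup G) ⊓ L : Subgroup G) : Set G) *
        (((⁅T, T⁆ : Subgroup G) ⊓ M : Subgroup G) : Set G)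
        = ((⁅T, T⁆ : Subgroup G) : Set G) := by
  intro L M hL hM _ hsup
  have hTop := Subgroup.commutator_top_left_eq_of_commutator_eq_inf (T := T) hT'
  have hle : ⁅T, T⁆ ≤ (⁅T, T⁆ ⊓ L) ⊔ (⁅T, T⁆ ⊓ M) :=
    calc ⁅T, T⁆ = ⁅L ⊔ M, T⁆ := by rw [hsup, hTop]
      _ = ⁅L, T⁆ ⊔ ⁅M, T⁆ := Subgroup.commutator_sup_left L M T
      _ ≤ (⁅T, T⁆ ⊓ L) ⊔ (⁅T, T⁆ ⊓ M) := by
        rw [← hTop]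
        exact sup_le_sup
          (le_inf (Subgroup.commutator_mono le_top le_rfl) (Subgroup.commutator_le_left L T))
          (le_inf (Subgroup.commutator_mono le_top le_rfl) (Subgroup.commutator_le_left M T))
  rw [← Subgroup.mul_normal, le_antisymm (sup_le inf_le_left inf_le_left) hle]

theorem derived_of_normal_directlyDecomposable
    {G : Type*} [Group G] [Finite G] (T : Subgroup G) (hT : T.Normal)
    (hT' : ⁅T, T⁆ = T ⊓ commutator G) :
    ∀ L M : Subgroup G, L.Normal → M.Normal → L ⊓ M = ⊥ → L ⊔ M = ⊤ →
      (((⁅T, T⁆ : Subgroup G) ⊓ L : Subgroup G) : Set G) *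
        (((⁅T, T⁆ : Subgroup G) ⊓ M : Subgroup G) : Set G)
        = ((⁅T, T⁆ : Subgroup G) : Set G) :=
  derived_of_normal_directlyDecomposable_general T hT hT'
end

section
/- Let G be a finite abelian group with an internal direct product decomposition G = H · K, and let H₀ be a subgroup of G such that H₀ ≅ H and G/H₀ ≅ K. Then H₀ is a direct factor of G: there exists a subgroup K₀ with H₀ · K₀ = G and H₀ ∩ K₀ = 1. -/
/-!
Counting `n`-th powers in two ways, `|G^n| = |H₀ ⊓ G^n| * |(G/H₀)^n|` and
`|G^n| = |H^n| * |K^n|`, the isomorphisms `H₀ ≃ H`, `G/H₀ ≃ K` force `H₀ ⊓ G^n = H₀^n`: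
`H₀` is a pure subgroup. Writing `G/H₀` as a product of cyclic groups, purity lets us lift each
cyclic generator to an element of `G` of the same order; the lifts define a section of
`G → G/H₀`, whose range is a complement of `H₀`.
-/

open Subgroup

section PowRange

variable {A B : Type*} [CommGroup A] [CommGroup B]

theorem MonoidHom.map_range_powMonoidHom (f : A →* B) (n : ℕ) :
    (powMonoidHom n : A →* A).range.map f = f.range.map (powMonoidHom n) := by
  rw [← MonoidHom.range_comp, ← MonoidHom.range_comp]
  congr 1
  ext
  simp

theorem MonoidHom.map_range_powMonoidHom_of_surjective {f : A →* B}
    (hf : Function.Surjective f) (n : ℕ) :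
    (powMonoidHom n : A →* A).range.map f = (powMonoidHom n : B →* B).range := by
  rw [f.map_range_powMonoidHom, f.range_eq_top.2 hf, ← MonoidHom.range_eq_map]

theorem MulEquiv.card_range_powMonoidHom (e : A ≃* B) (n : ℕ) :
    Nat.card (powMonoidHom n : A →* A).range = Nat.card (powMonoidHom n : B →* B).range := by
  rw [← MonoidHom.map_range_powMonoidHom_of_surjective (f := e.toMonoidHom) e.surjective,
    card_map_of_injective e.injective]

theorem card_range_powMonoidHom_prod (n : ℕ) :
    Nat.card (powMonoidHom n : A × B →* A × B).range =
      Nat.card (powMonoidHom n : A →* A).range * Nat.card (powMonoidHom n : B →* B).range := by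
  have : (powMonoidHom n : A × B →* A × B) = (powMonoidHom n).prodMap (powMonoidHom n) := by
    ext <;> simp
  rw [this, MonoidHom.range_prodMap, ← Nat.card_prod]
  exact Nat.card_congr (prodEquiv _ _).toEquiv

end PowRange

theorem MonoidHom.card_ker_inf_mul_card_map {G Q : Type*} [Group G] [Group Q] (f : G →* Q)
    (S : Subgroup G) : Nat.card (f.ker ⊓ S : Subgroup G) * Nat.card (S.map f) = Nat.card S := by
  have := relIndex_mul_relIndex ⊥ (f.ker ⊓ S) S bot_le inf_le_right
  rwa [relIndex_bot_left, relIndex_bot_left, inf_relIndex_right, relIndex_ker] at this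

theorem Subgroup.card_range_powMonoidHom_eq {G : Type*} [CommGroup G] (N : Subgroup G) (n : ℕ) :
    Nat.card (powMonoidHom n : G →* G).range =
      Nat.card (N ⊓ (powMonoidHom n).range : Subgroup G) *
        Nat.card (powMonoidHom n : G ⧸ N →* G ⧸ N).range := by
  rw [← (QuotientGroup.mk' N).card_ker_inf_mul_card_map, QuotientGroup.ker_mk',
    MonoidHom.map_range_powMonoidHom_of_surjective (QuotientGroup.mk'_surjective N)]

def Subgroup.IsPure {G : Type*} [CommGroup G] (N : Subgroup G) : Prop :=
  ∀ n : ℕ, N ⊓ (powMonoidHom n).range = N.map (powMonoidHom n)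

theorem Subgroup.isPure_of_mulEquiv {G A B : Type*} [CommGroup G] [Finite G] [CommGroup A]
    [CommGroup B] (N : Subgroup G) (e : G ≃* A × B) (eN : N ≃* A) (eQ : G ⧸ N ≃* B) :
    N.IsPure := by
  intro n
  have hle : N.map (powMonoidHom n) ≤ N ⊓ (powMonoidHom n).range := by
    rintro _ ⟨a, ha, rfl⟩
    exact ⟨N.pow_mem ha n, a, rfl⟩
  refine (eq_of_le_of_card_ge hle ?_).symm
  have hN : Nat.card (N.map (powMonoidHom n)) = Nat.card (powMonoidHom n : A →* A).range := by
    rw [← N.range_subtype, ← MonoidHom.map_range_powMonoidHom,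
      card_map_of_injective N.subtype_injective, eN.card_range_powMonoidHom]
  have : Finite B := .of_equiv _ eQ.toEquiv
  have hcount := N.card_range_powMonoidHom_eq n
  rw [e.card_range_powMonoidHom, card_range_powMonoidHom_prod, eQ.card_range_powMonoidHom] at hcount
  rw [hN, Nat.eq_of_mul_eq_mul_right Nat.card_pos hcount]

theorem Subgroup.IsPure.exists_pow_eq_one_mk_eq {G : Type*} [CommGroup G] {N : Subgroup G}
    (hN : N.IsPure) {n : ℕ} {q : G ⧸ N} (hq : q ^ n = 1) :
    ∃ x : G, x ^ n = 1 ∧ (x : G ⧸ N) = q := by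
  obtain ⟨g, rfl⟩ := QuotientGroup.mk_surjective q
  have hgn : g ^ n ∈ N ⊓ (powMonoidHom n).range :=
    ⟨(QuotientGroup.eq_one_iff _).1 (by rwa [QuotientGroup.mk_pow]), g, rfl⟩
  rw [hN n] at hgn
  obtain ⟨a, ha, han⟩ := hgn
  refine ⟨g * a⁻¹, ?_, ?_⟩
  · rw [mul_pow, inv_pow, show a ^ n = g ^ n from han, mul_inv_cancel]
  · rw [QuotientGroup.mk_mul, QuotientGroup.mk_inv, (QuotientGroup.eq_one_iff a).2 ha, inv_one,
      mul_one]

theorem exists_monoidHom_multiplicative_zmod_apply_ofAdd_one {G : Type*} [Group G] {n : ℕ}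
    {x : G} (hx : x ^ n = 1) :
    ∃ f : Multiplicative (ZMod n) →* G, f (.ofAdd 1) = x := by
  have hxn : zmultiplesHom (Additive G) (.ofMul x) n = 0 := by
    simpa [← ofMul_pow] using congrArg Additive.ofMul hx
  refine ⟨AddMonoidHom.toMultiplicativeLeft (ZMod.lift n ⟨_, hxn⟩), ?_⟩
  simpa using congrArg Additive.toMul (ZMod.lift_coe n ⟨_, hxn⟩ 1)

theorem MonoidHom.ext_multiplicative_zmod {G : Type*} [Group G] {n : ℕ}
    {f g : Multiplicative (ZMod n) →* G} (h : f (.ofAdd 1) = g (.ofAdd 1)) : f = g := by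
  refine MonoidHom.ext fun v => ?_
  obtain ⟨k, hk⟩ := ZMod.intCast_surjective (Multiplicative.toAdd v)
  have hv : v = Multiplicative.ofAdd 1 ^ k := by
    rw [← ofAdd_zsmul, zsmul_one, hk, ofAdd_toAdd]
  rw [hv, map_zpow, map_zpow, h]

theorem MonoidHom.exists_comp_eq_id_of_forall_pow_eq_one {G Q : Type*} [CommGroup G]
    [CommGroup Q] [Finite Q] (π : G →* Q)
    (hlift : ∀ (n : ℕ) (q : Q), q ^ n = 1 → ∃ x : G, x ^ n = 1 ∧ π x = q) :
    ∃ s : Q →* G, π.comp s = MonoidHom.id Q := by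
  classical
  obtain ⟨ι, _, n, -, ⟨φ⟩⟩ := CommGroup.equiv_prod_multiplicative_zmod_of_finite Q
  let e : ∀ i, Multiplicative (ZMod (n i)) →* Q := fun i =>
    φ.symm.toMonoidHom.comp (MonoidHom.mulSingle (fun j => Multiplicative (ZMod (n j))) i)
  have he : ∀ i, e i (.ofAdd 1) ^ n i = 1 := fun i => by
    rw [← map_pow, ← ofAdd_nsmul, nsmul_one, ZMod.natCast_self, ofAdd_zero, map_one]
  choose x hxn hx using fun i => hlift (n i) _ (he i)
  choose t ht using fun i => exists_monoidHom_multiplicative_zmod_apply_ofAdd_one (hxn i)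
  have hcomm : Pairwise fun i j => ∀ a b, Commute (t i a) (t j b) :=
    fun _ _ _ _ _ => Commute.all _ _
  let s := MonoidHom.noncommPiCoprod t hcomm
  have hs : π.comp s = φ.symm.toMonoidHom := by
    refine MonoidHom.functions_ext' _ _ _ fun i => MonoidHom.ext_multiplicative_zmod ?_
    change π (s (Pi.mulSingle i (.ofAdd 1))) = e i (.ofAdd 1)
    rw [MonoidHom.noncommPiCoprod_mulSingle, ht, hx]
  refine ⟨s.comp φ.toMonoidHom, ?_⟩
  rw [← MonoidHom.comp_assoc, hs]
  exact MonoidHom.ext φ.symm_apply_apply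

theorem MonoidHom.isCompl_ker_range_of_comp_eq_id {G Q : Type*} [Group G] [Group Q]
    {f : G →* Q} {s : Q →* G} (h : f.comp s = MonoidHom.id Q) : IsCompl f.ker s.range := by
  have hfs : ∀ q, f (s q) = q := DFunLike.congr_fun h
  refine .of_eq (eq_bot_iff.2 ?_) (eq_top_iff.2 fun g _ => ?_)
  · rintro _ ⟨hker, q, rfl⟩
    have hq : q = 1 := hfs q ▸ hker
    simp [hq]
  · rw [← inv_mul_cancel_right g (s (f g))]
    exact mul_mem (mem_sup_left (by simp [hfs])) (mem_sup_right ⟨f g, rfl⟩)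

noncomputable def Subgroup.prodMulEquivOfIsCompl {G : Type*} [CommGroup G] {H K : Subgroup G}
    (h : IsCompl H K) : H × K ≃* G :=
  MulEquiv.ofBijective (H.subtype.coprod K.subtype) ⟨mul_injective_of_disjoint h.disjoint,
    fun g => by
      obtain ⟨y, hy, z, hz, hyz⟩ := mem_sup.1 (h.sup_eq_top ▸ mem_top g)
      exact ⟨(⟨y, hy⟩, ⟨z, hz⟩), hyz⟩⟩

theorem abelian_direct_extension
    {G : Type*} [CommGroup G] [Finite G] (H K : Subgroup G)
    (hHK : H ⊓ K = ⊥) (hsup : H ⊔ K = ⊤)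
    (H₀ : Subgroup G)
    (h₁ : Nonempty (H₀ ≃* H)) (h₂ : Nonempty ((G ⧸ H₀) ≃* K)) :
    ∃ K₀ : Subgroup G, H₀ ⊔ K₀ = ⊤ ∧ H₀ ⊓ K₀ = ⊥ := by
  have hpure : H₀.IsPure :=
    H₀.isPure_of_mulEquiv (prodMulEquivOfIsCompl (.of_eq hHK hsup)).symm h₁.some h₂.some
  obtain ⟨s, hs⟩ := (QuotientGroup.mk' H₀).exists_comp_eq_id_of_forall_pow_eq_one
    fun _ _ hq => hpure.exists_pow_eq_one_mk_eq hq
  have hcompl := MonoidHom.isCompl_ker_range_of_comp_eq_id hs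
  rw [QuotientGroup.ker_mk'] at hcompl
  exact ⟨s.range, hcompl.sup_eq_top, hcompl.inf_eq_bot⟩
end

section
/- Let G be a finite group with internal direct decomposition G = H·K, and H₀ ⊴ G with H₀ ≅ H and G/H₀ ≅ K. Then H₀' = H₀ ∩ G'. -/
private lemma card_commutator_congr {A B : Type*} [Group A] [Group B] (e : A ≃* B) :
    Nat.card (commutator A) = Nat.card (commutator B) := by
  have h : (commutator A).map e.toMonoidHom = commutator B := by
    rw [_root_.commutator_def, _root_.commutator_def, Subgroup.map_commutator,
      Subgroup.map_top_of_surjective _ e.surjective]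
  rw [← h]
  exact Nat.card_congr ((commutator A).equivMapOfInjective e.toMonoidHom e.injective).toEquiv

private lemma card_commutator_subgroup {G : Type*} [Group G] (S : Subgroup G) :
    Nat.card (⁅S, S⁆ : Subgroup G) = Nat.card (commutator ↥S) := by
  have h : (commutator ↥S).map S.subtype = ⁅S, S⁆ := by
    rw [_root_.commutator_def, Subgroup.map_commutator, ← MonoidHom.range_eq_map, Subgroup.subtype_range]
  rw [← h]
  exact (Nat.card_congr ((commutator ↥S).equivMapOfInjective S.subtype
    S.subtype_injective).toEquiv).symm

theorem derived_of_H0_eq_inf_commutator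
    {G : Type*} [Group G] [Finite G]
    (H K : Subgroup G) (hH : H.Normal) (hK : K.Normal)
    (hHK : H ⊓ K = ⊥) (hsup : H ⊔ K = ⊤)
    (H₀ : Subgroup G) [H₀.Normal]
    (h₁ : Nonempty (H₀ ≃* H)) (h₂ : Nonempty ((G ⧸ H₀) ≃* K)) :
    ⁅H₀, H₀⁆ = H₀ ⊓ commutator G := by
  -- easy inclusion
  have hle : ⁅H₀, H₀⁆ ≤ H₀ ⊓ commutator G := by
    refine le_inf (Subgroup.commutator_le_left _ _) ?_
    rw [_root_.commutator_def]
    exact Subgroup.commutator_mono le_top le_top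
  -- the isomorphism G ≃* H × K
  have hcomm : ∀ (m : H) (n : K), Commute (H.subtype m) (K.subtype n) := fun m n =>
    Subgroup.commute_of_normal_of_disjoint H K hH hK (disjoint_iff.mpr hHK) m n m.2 n.2
  set f : H × K →* G := MonoidHom.noncommCoprod H.subtype K.subtype hcomm with hf
  have hfsurj : Function.Surjective f := by
    rw [← MonoidHom.range_eq_top]
    refine top_le_iff.mp ?_
    rw [← hsup, sup_le_iff]
    constructor
    · intro x hx; exact ⟨(⟨x, hx⟩, 1), by simp [hf, MonoidHom.noncommCoprod]⟩
    · intro x hx; exact ⟨(1, ⟨x, hx⟩), by simp [hf, MonoidHom.noncommCoprod]⟩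
  have hfinj : Function.Injective f := by
    rw [injective_iff_map_eq_one]
    rintro ⟨h, k⟩ hp
    have : (h : G) * k = 1 := hp
    have hmem : (h : G) ∈ H ⊓ K := by
      refine ⟨h.2, ?_⟩
      have : (h : G) = (k : G)⁻¹ := by
        rw [eq_inv_iff_mul_eq_one]; exact this
      rw [this]; exact K.inv_mem k.2
    rw [hHK, Subgroup.mem_bot] at hmem
    have hk1 : (k : G) = 1 := by rwa [hmem, one_mul] at this
    exact Prod.ext (Subtype.ext hmem) (Subtype.ext hk1)
  let e : (H × K) ≃* G := MulEquiv.ofBijective f ⟨hfinj, hfsurj⟩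
  -- card of commutator G
  have hcardG : Nat.card (commutator G) = Nat.card (⁅H, H⁆ : Subgroup G) * Nat.card (⁅K, K⁆ : Subgroup G) := by
    rw [← card_commutator_congr e]
    have : commutator (↥H × ↥K) = (commutator ↥H).prod (commutator ↥K) := by
      rw [_root_.commutator_def, _root_.commutator_def, _root_.commutator_def, ← Subgroup.top_prod_top,
        Subgroup.commutator_prod_prod]
    rw [this, Nat.card_congr ((commutator ↥H).prodEquiv (commutator ↥K)).toEquiv,
      Nat.card_prod, card_commutator_subgroup, card_commutator_subgroup]
  -- card via the quotient by H₀
  obtain ⟨e₂⟩ := h₂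
  have hcardG' : Nat.card (commutator G)
      = Nat.card (⁅K, K⁆ : Subgroup G) * Nat.card (H₀ ⊓ commutator G : Subgroup G) := by
    set f₂ : (commutator G) →* G ⧸ H₀ := (QuotientGroup.mk' H₀).comp (commutator G).subtype
    have hker : f₂.ker = H₀.subgroupOf (commutator G) := by
      rw [← MonoidHom.comap_ker, QuotientGroup.ker_mk']; rfl
    have hrange : f₂.range = commutator (G ⧸ H₀) := by
      rw [MonoidHom.range_comp, Subgroup.subtype_range, _root_.commutator_def, _root_.commutator_def,
        Subgroup.map_commutator, Subgroup.map_top_of_surjective _ (QuotientGroup.mk'_surjective H₀)]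
    have hq := Subgroup.card_eq_card_quotient_mul_card_subgroup f₂.ker
    rw [Nat.card_congr (QuotientGroup.quotientKerEquivRange f₂).toEquiv, hrange, hker] at hq
    have hkercard : Nat.card (H₀.subgroupOf (commutator G))
        = Nat.card (H₀ ⊓ commutator G : Subgroup G) := by
      rw [← Subgroup.subgroupOf_map_subtype]
      exact Nat.card_congr ((H₀.subgroupOf (commutator G)).equivMapOfInjective
        (commutator G).subtype (commutator G).subtype_injective).toEquiv
    have hqc : Nat.card (commutator (G ⧸ H₀)) = Nat.card (⁅K, K⁆ : Subgroup G) := by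
      rw [card_commutator_congr e₂, card_commutator_subgroup]
    rw [hq, hqc, hkercard]
  -- cards of H-side
  obtain ⟨e₁⟩ := h₁
  have hcardH : Nat.card (⁅H₀, H₀⁆ : Subgroup G) = Nat.card (⁅H, H⁆ : Subgroup G) := by
    rw [card_commutator_subgroup, card_commutator_subgroup, card_commutator_congr e₁]
  -- conclude
  have hpos : 0 < Nat.card (⁅K, K⁆ : Subgroup G) := Nat.card_pos
  have hcards : Nat.card (⁅K, K⁆ : Subgroup G) * Nat.card (H₀ ⊓ commutator G : Subgroup G)
      = Nat.card (⁅K, K⁆ : Subgroup G) * Nat.card (⁅H₀, H₀⁆ : Subgroup G) := by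
    rw [← hcardG', hcardG, hcardH, Nat.mul_comm]
  have hcard : Nat.card (H₀ ⊓ commutator G : Subgroup G) = Nat.card (⁅H₀, H₀⁆ : Subgroup G) :=
    Nat.eq_of_mul_eq_mul_left hpos hcards
  exact Subgroup.eq_of_le_of_card_ge hle (le_of_eq hcard)
end

section
/- Let G be a finite group with internal direct decomposition G = H·K, and H₀ ⊴ G with H₀ ≅ H and G/H₀ ≅ K. Then Z(H₀) = H₀ ∩ Z(G). -/
/-- Centers of isomorphic groups have the same cardinality. -/
lemma card_center_congr {M N : Type*} [Group M] [Group N] (e : M ≃* N) :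
    Nat.card (Subgroup.center M) = Nat.card (Subgroup.center N) := by
  refine Nat.card_congr ⟨fun z => ⟨e z, ?_⟩, fun z => ⟨e.symm z, ?_⟩, ?_, ?_⟩
  · rw [Subgroup.mem_center_iff]
    intro g
    have := Subgroup.mem_center_iff.mp z.2 (e.symm g)
    calc g * e z = e (e.symm g) * e z := by rw [e.apply_symm_apply]
      _ = e (e.symm g * z) := by rw [map_mul]
      _ = e (z * e.symm g) := by rw [this]
      _ = e z * g := by rw [map_mul, e.apply_symm_apply]
  · rw [Subgroup.mem_center_iff]
    intro g
    have := Subgroup.mem_center_iff.mp z.2 (e g)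
    calc g * e.symm z = e.symm (e g) * e.symm z := by rw [e.symm_apply_apply]
      _ = e.symm (e g * z) := by rw [map_mul]
      _ = e.symm (z * e g) := by rw [this]
      _ = e.symm z * g := by rw [map_mul, e.symm_apply_apply]
  · intro z; ext; simp
  · intro z; ext; simp

/-- `L ⊓ centralizer L` has the same cardinality as the center of `L`. -/
lemma card_inf_centralizer {G : Type*} [Group G] (L : Subgroup G) :
    Nat.card (L ⊓ Subgroup.centralizer (L : Set G) : Subgroup G)
      = Nat.card (Subgroup.center L) := by
  refine Nat.card_congr ⟨fun x => ⟨⟨(x : G), x.2.1⟩, ?_⟩,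
    fun z => ⟨(z : L), Subgroup.mem_inf.mpr ⟨(z : L).2, ?_⟩⟩, ?_, ?_⟩
  · rw [Subgroup.mem_center_iff]
    intro g
    exact Subtype.ext (Subgroup.mem_centralizer_iff.mp x.2.2 g g.2)
  · rw [Subgroup.mem_centralizer_iff]
    intro h hh
    exact congrArg Subtype.val (Subgroup.mem_center_iff.mp z.2 ⟨h, hh⟩)
  · intro x; rfl
  · intro z; rfl

lemma subgroup_eq_of_le_of_card_le {G : Type*} [Group G] [Finite G] {P Q : Subgroup G}
    (h : P ≤ Q) (hc : Nat.card Q ≤ Nat.card P) : P = Q := by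
  refine le_antisymm h fun x hx => ?_
  have hcard : Nat.card (P.subgroupOf Q) = Nat.card P :=
    Nat.card_congr (Subgroup.subgroupOfEquivOfLe h).toEquiv
  have htop : P.subgroupOf Q = ⊤ := by
    rw [← Subgroup.card_eq_iff_eq_top, hcard]
    refine le_antisymm (le_trans (le_of_eq hcard.symm) ?_) hc
    exact Nat.card_le_card_of_injective _ (P.subgroupOf Q).subtype_injective
  have : (⟨x, hx⟩ : Q) ∈ P.subgroupOf Q := htop ▸ Subgroup.mem_top _
  exact this

theorem center_of_H0_eq_inf_center
    {G : Type*} [Group G] [Finite G]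
    (H K : Subgroup G) (hH : H.Normal) (hK : K.Normal)
    (hHK : H ⊓ K = ⊥) (hsup : H ⊔ K = ⊤)
    (H₀ : Subgroup G) [H₀.Normal]
    (h₁ : Nonempty (H₀ ≃* H)) (h₂ : Nonempty ((G ⧸ H₀) ≃* K)) :
    H₀ ⊓ Subgroup.centralizer (H₀ : Set G) = H₀ ⊓ Subgroup.center G := by
  classical
  set A : Subgroup G := H ⊓ Subgroup.centralizer (H : Set G) with hA
  set B : Subgroup G := K ⊓ Subgroup.centralizer (K : Set G) with hB
  -- A and B are contained in the center of G
  have hAc : A ≤ Subgroup.center G := by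
    intro a ha
    rw [Subgroup.mem_center_iff]
    intro g
    have htop : (⊤ : Subgroup G) ≤ Subgroup.centralizer {a} := by
      rw [← hsup]
      refine sup_le ?_ ?_
      · intro h hh
        rw [Subgroup.mem_centralizer_iff]
        intro x hxa
        rw [Set.mem_singleton_iff.mp hxa]
        exact (Subgroup.mem_centralizer_iff.mp ha.2 h hh).symm
      · intro k hk
        rw [Subgroup.mem_centralizer_iff]
        intro x hxa
        rw [Set.mem_singleton_iff.mp hxa]
        exact Subgroup.commute_of_normal_of_disjoint H K hH hK (disjoint_iff.mpr hHK) a k ha.1 hk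
    exact (Subgroup.mem_centralizer_iff.mp (htop (Subgroup.mem_top g)) a rfl).symm
  have hBc : B ≤ Subgroup.center G := by
    intro b hb
    rw [Subgroup.mem_center_iff]
    intro g
    have htop : (⊤ : Subgroup G) ≤ Subgroup.centralizer {b} := by
      rw [← hsup]
      refine sup_le ?_ ?_
      · intro h hh
        rw [Subgroup.mem_centralizer_iff]
        intro x hxb
        rw [Set.mem_singleton_iff.mp hxb]
        exact (Subgroup.commute_of_normal_of_disjoint H K hH hK (disjoint_iff.mpr hHK) h b hh hb.1).symm
      · intro k hk
        rw [Subgroup.mem_centralizer_iff]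
        intro x hxb
        rw [Set.mem_singleton_iff.mp hxb]
        exact (Subgroup.mem_centralizer_iff.mp hb.2 k hk).symm
    exact (Subgroup.mem_centralizer_iff.mp (htop (Subgroup.mem_top g)) b rfl).symm
  -- injection A × B → center G, giving a lower bound on the center's cardinality
  have hinj : Function.Injective
      (fun p : A × B => (⟨(p.1 : G) * (p.2 : G), mul_mem (hAc p.1.2) (hBc p.2.2)⟩ :
        Subgroup.center G)) := by
    rintro ⟨a₁, b₁⟩ ⟨a₂, b₂⟩ hab
    have h' : (a₁ : G) * b₁ = (a₂ : G) * b₂ := congrArg Subtype.val hab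
    have key : (a₂ : G)⁻¹ * a₁ = (b₂ : G) * (b₁ : G)⁻¹ := by
      have h2 : (a₂ : G)⁻¹ * ((a₁ : G) * b₁) * (b₁ : G)⁻¹
          = (a₂ : G)⁻¹ * ((a₂ : G) * b₂) * (b₁ : G)⁻¹ := by rw [h']
      simpa [mul_assoc] using h2
    have hmemH : (a₂ : G)⁻¹ * a₁ ∈ H := mul_mem (inv_mem a₂.2.1) a₁.2.1
    have hmemK : (a₂ : G)⁻¹ * a₁ ∈ K := key ▸ mul_mem b₂.2.1 (inv_mem b₁.2.1)
    have h1 : (a₂ : G)⁻¹ * a₁ = 1 := by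
      have := hHK ▸ (Subgroup.mem_inf.mpr ⟨hmemH, hmemK⟩)
      exact this
    have ha : (a₁ : G) = a₂ := by
      have := mul_eq_one_iff_inv_eq.mp h1
      simpa using this.symm
    have hbk : (b₂ : G) * (b₁ : G)⁻¹ = 1 := by rw [← key, h1]
    have hb : (b₁ : G) = b₂ := (mul_inv_eq_one.mp hbk).symm
    have ha' : a₁ = a₂ := Subtype.ext ha
    have hb' : b₁ = b₂ := Subtype.ext hb
    rw [ha', hb']
  have hlow : Nat.card A * Nat.card B ≤ Nat.card (Subgroup.center G) := by
    have := Nat.card_le_card_of_injective _ hinj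
    rwa [Nat.card_prod] at this
  -- the restriction of the quotient map to the center
  set φ : Subgroup.center G →* G ⧸ H₀ :=
    (QuotientGroup.mk' H₀).comp (Subgroup.center G).subtype with hφ
  have hker : φ.ker = H₀.subgroupOf (Subgroup.center G) := by
    ext x
    simp [hφ, MonoidHom.mem_ker, Subgroup.mem_subgroupOf, QuotientGroup.eq_one_iff]
  have hkercard : Nat.card φ.ker = Nat.card (H₀ ⊓ Subgroup.center G : Subgroup G) := by
    rw [hker, ← Subgroup.inf_subgroupOf_right]
    exact Nat.card_congr (Subgroup.subgroupOfEquivOfLe inf_le_right).toEquiv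
  have hsplit : Nat.card (Subgroup.center G)
      = Nat.card (Subgroup.center G ⧸ φ.ker) * Nat.card φ.ker :=
    Subgroup.card_eq_card_quotient_mul_card_subgroup φ.ker
  have hqrange : Nat.card (Subgroup.center G ⧸ φ.ker) = Nat.card φ.range :=
    Nat.card_congr (QuotientGroup.quotientKerEquivRange φ).toEquiv
  -- the range of φ is contained in the center of the quotient
  have hrange_le : φ.range ≤ Subgroup.center (G ⧸ H₀) := by
    rintro _ ⟨z, rfl⟩
    rw [Subgroup.mem_center_iff]
    intro q
    induction q using QuotientGroup.induction_on with
    | H g =>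
      show ((g : G ⧸ H₀) * ((z : G) : G ⧸ H₀)) = ((z : G) : G ⧸ H₀) * (g : G ⧸ H₀)
      rw [← QuotientGroup.mk_mul, ← QuotientGroup.mk_mul,
        Subgroup.mem_center_iff.mp z.2 g]
  have hrange_card : Nat.card φ.range ≤ Nat.card (Subgroup.center (G ⧸ H₀)) :=
    Subgroup.card_le_of_le hrange_le
  -- cardinality bookkeeping
  have ht : Nat.card (H₀ ⊓ Subgroup.centralizer (H₀ : Set G) : Subgroup G) = Nat.card A := by
    rw [card_inf_centralizer, card_center_congr h₁.some, hA, card_inf_centralizer]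
  have hb2 : Nat.card (Subgroup.center (G ⧸ H₀)) = Nat.card B := by
    rw [card_center_congr h₂.some, hB, card_inf_centralizer]
  have hBpos : 0 < Nat.card B := Nat.card_pos
  -- combine into t ≤ a
  have hchain : Nat.card A * Nat.card B
      ≤ Nat.card (H₀ ⊓ Subgroup.center G : Subgroup G) * Nat.card B := by
    calc Nat.card A * Nat.card B ≤ Nat.card (Subgroup.center G) := hlow
      _ = Nat.card φ.range * Nat.card φ.ker := by rw [hsplit, hqrange]
      _ ≤ Nat.card (Subgroup.center (G ⧸ H₀)) * Nat.card φ.ker :=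
          Nat.mul_le_mul_right _ hrange_card
      _ = Nat.card (H₀ ⊓ Subgroup.center G : Subgroup G) * Nat.card B := by
          rw [hb2, hkercard, Nat.mul_comm]
  have hta : Nat.card A ≤ Nat.card (H₀ ⊓ Subgroup.center G : Subgroup G) :=
    Nat.le_of_mul_le_mul_right hchain hBpos
  have hle : H₀ ⊓ Subgroup.center G ≤ H₀ ⊓ Subgroup.centralizer (H₀ : Set G) :=
    inf_le_inf_left _ (Subgroup.center_le_centralizer _)
  exact (subgroup_eq_of_le_of_card_le hle (ht ▸ hta)).symm
end

section
/- Let G be a finite group, H₀ a normal subgroup, and suppose every quotient situation of smaller order satisfies the direct extension property. If H₀ contains a nontrivial direct factor L of G, and G/L ≅ (H₀/L) × (G/H₀) with H₀/L a direct factor of G/L, then H₀ is a direct factor of G. (Equivalently: if L ≤ H₀ is a direct factor of G and H₀/L is a direct factor of G/L, then H₀ is a direct factor of G.) -/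
open scoped Pointwise


theorem direct_factor_of_quotient_direct_factor
    {G : Type*} [Group G] [Finite G]
    (L : Subgroup G) [L.Normal]
    (P : Subgroup G) (hP : P.Normal) (hLP : L ⊓ P = ⊥) (hLPsup : L ⊔ P = ⊤)
    (H₀ : Subgroup G) [H₀.Normal] (hLH₀ : L ≤ H₀)
    (hquot : ∃ Q : Subgroup (G ⧸ L), Q.Normal ∧
      H₀.map (QuotientGroup.mk' L) ⊔ Q = ⊤ ∧ H₀.map (QuotientGroup.mk' L) ⊓ Q = ⊥) :
    ∃ K₀ : Subgroup G, K₀.Normal ∧ H₀ ⊔ K₀ = ⊤ ∧ H₀ ⊓ K₀ = ⊥ := by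
  obtain ⟨Q, hQn, hQsup, hQinf⟩ := hquot
  set f := QuotientGroup.mk' L
  have hker : f.ker = L := QuotientGroup.ker_mk' L
  have hfsurj : Function.Surjective f := QuotientGroup.mk'_surjective L
  set K := Q.comap f with hK
  have hKn : K.Normal := hQn.comap f
  have hLK : L ≤ K := by
    rw [← hker, ← f.comap_bot]; exact Subgroup.comap_mono bot_le
  have hcomapmap : (H₀.map f).comap f = H₀ := by
    rw [Subgroup.comap_map_eq, hker, sup_eq_left.mpr hLH₀]
  -- H₀ ⊓ K = L
  have hinfK : H₀ ⊓ K = L := by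
    have : H₀ ⊓ K = (H₀.map f ⊓ Q).comap f := by
      rw [Subgroup.comap_inf, hcomapmap]
    rw [this, hQinf, f.comap_bot, hker]
  -- H₀ ⊔ K = ⊤
  have hsupK : H₀ ⊔ K = ⊤ := by
    have hkerle : f.ker ≤ H₀ ⊔ K := by rw [hker]; exact hLH₀.trans le_sup_left
    have hmap : (H₀ ⊔ K).map f = ⊤ := by
      rw [Subgroup.map_sup, Subgroup.map_comap_eq_self_of_surjective hfsurj, hQsup]
    have := congrArg (Subgroup.comap f) hmap
    rwa [Subgroup.comap_map_eq_self hkerle, Subgroup.comap_top] at this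
  refine ⟨K ⊓ P, ⟨fun n hn g => ⟨hKn.conj_mem n hn.1 g, hP.conj_mem n hn.2 g⟩⟩, ?_, ?_⟩
  · -- modular step: K ≤ L ⊔ (K ⊓ P)
    have hKle : K ≤ L ⊔ (K ⊓ P) := by
      intro k hk
      have hkmem : k ∈ (L : Set G) * (P : Set G) := by
        rw [← Subgroup.normal_mul, hLPsup]; trivial
      obtain ⟨l, hl, p, hp, hlp⟩ := hkmem
      have hpK : p ∈ K := by
        have : p = l⁻¹ * k := by rw [← hlp]; group
        rw [this]; exact K.mul_mem (K.inv_mem (hLK hl)) hk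
      rw [← hlp]
      exact Subgroup.mul_mem _ (Subgroup.mem_sup_left hl)
        (Subgroup.mem_sup_right ⟨hpK, hp⟩)
    apply le_antisymm le_top
    calc (⊤ : Subgroup G) = H₀ ⊔ K := hsupK.symm
      _ ≤ H₀ ⊔ (L ⊔ (K ⊓ P)) := sup_le_sup_left hKle _
      _ = (H₀ ⊔ L) ⊔ (K ⊓ P) := (sup_assoc ..).symm
      _ = H₀ ⊔ (K ⊓ P) := by rw [sup_eq_left.mpr hLH₀]
  · rw [← inf_assoc, hinfK, hLP]
end

section
/- For the group G = (Z/pZ)^ℕ × (Z/p²Z)^ℕ (p prime), there exist subgroups H, K, H₀ of G with G = H·K internally (H ∩ K = 1), H ≅ H₀ ≅ (Z/pZ)^ℕ, K ≅ G/H₀ ≅ G, yet H₀ is not a direct factor of G. Thus the direct extension theorem fails for infinite groups. -/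
/-!
Splitting `ℕ` into even and odd positions gives `G ≅ (ℤ/p)^ℕ × G`, and the two factors are `H`
and `K`. The subgroup `H₀ = (ℤ/p)^ℕ × {g | g (2n) = 0, g (2n+1) ∈ pℤ/p²ℤ}` is the image of
`(ℤ/p)^ℕ × (ℤ/p)^ℕ ≅ (ℤ/p)^ℕ` under `b ↦ p b` on the odd coordinates of `g`, and it is the
kernel of `(f, g) ↦ (g (2n), g (2n+1) mod p)`, which maps onto `(ℤ/p²)^ℕ × (ℤ/p)^ℕ ≅ G`.
But `p H₀ = 0`, while for `x = (0, g)` with `g` equal to `1` on odd coordinates, `p x` is a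
nonzero element of `H₀`. If `G = H₀ ⊕ K₀` and `x = h + k`, then `p x = p k ∈ H₀ ∩ K₀`,
a contradiction.
-/

open Function

theorem AddSubgroup.not_exists_complement_of_nsmul {G : Type*} [AddCommGroup G]
    {H : AddSubgroup G} {n : ℕ} (hH : ∀ h ∈ H, n • h = 0) {x : G} (hx : n • x ∈ H)
    (hx₀ : n • x ≠ 0) : ¬ ∃ K : AddSubgroup G, H ⊔ K = ⊤ ∧ H ⊓ K = ⊥ := by
  rintro ⟨K, hsup, hinf⟩
  obtain ⟨h, hh, k, hk, rfl⟩ := AddSubgroup.mem_sup.mp (hsup ▸ AddSubgroup.mem_top x)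
  have hnk : n • (h + k) = n • k := by rw [smul_add, hH h hh, zero_add]
  apply hx₀
  rw [← AddSubgroup.mem_bot, ← hinf]
  exact ⟨hx, hnk ▸ AddSubgroup.nsmul_mem K hk n⟩

section Complement

variable {A B G : Type*} [AddGroup A] [AddGroup B] [AddGroup G] (φ : A × B ≃+ G)

theorem AddEquiv.injective_comp_inl : Injective ((φ : A × B →+ G).comp (.inl A B)) :=
  φ.injective.comp (Prod.mk_left_injective 0)

theorem AddEquiv.injective_comp_inr : Injective ((φ : A × B →+ G).comp (.inr A B)) :=
  φ.injective.comp (Prod.mk_right_injective 0)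

theorem AddEquiv.range_comp_inl_inf_range_comp_inr :
    ((φ : A × B →+ G).comp (.inl A B)).range ⊓ ((φ : A × B →+ G).comp (.inr A B)).range = ⊥ := by
  rw [eq_bot_iff]
  rintro _ ⟨⟨a, rfl⟩, ⟨b, hb⟩⟩
  obtain ⟨rfl, -⟩ := Prod.ext_iff.mp (φ.injective hb)
  simp

theorem AddEquiv.range_comp_inl_sup_range_comp_inr :
    ((φ : A × B →+ G).comp (.inl A B)).range ⊔ ((φ : A × B →+ G).comp (.inr A B)).range = ⊤ := by
  refine eq_top_iff.mpr fun x _ => ?_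
  obtain ⟨⟨a, b⟩, rfl⟩ := φ.surjective x
  have hab : φ (a, b) = φ (a, 0) + φ (0, b) := by simp [← map_add]
  rw [hab]
  exact add_mem (AddSubgroup.mem_sup_left ⟨a, rfl⟩) (AddSubgroup.mem_sup_right ⟨b, rfl⟩)

end Complement

theorem Function.Exact.comp_left {ι A B C : Type*} [Zero C] {f : A → B} {g : B → C}
    (h : Exact f g) : Exact (fun a : ι → A => f ∘ a) (fun b : ι → B => g ∘ b) := by
  intro y
  constructor
  · intro hy
    choose a ha using fun i => (h (y i)).mp (congrFun hy i)
    exact ⟨a, funext ha⟩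
  · rintro ⟨a, rfl⟩
    exact funext fun i => h.apply_apply_eq_zero (a i)

namespace ZMod

variable (p : ℕ)

def mulToSq : ZMod p →+ ZMod (p ^ 2) :=
  lift p ⟨(AddMonoidHom.mulLeft (p : ZMod (p ^ 2))).comp (Int.castAddHom _), by
    simp [← sq, ← Nat.cast_pow]⟩

theorem mulToSq_intCast (k : ℤ) : mulToSq p k = p * k :=
  lift_coe _ _ k

theorem mulToSq_one : mulToSq p 1 = p := by
  simpa using mulToSq_intCast p 1

theorem mulToSq_injective [NeZero p] : Injective (mulToSq p) := by
  refine (injective_iff_map_eq_zero _).mpr fun b hb => ?_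
  obtain ⟨k, rfl⟩ := intCast_surjective b
  rw [mulToSq_intCast, ← Int.cast_natCast, ← Int.cast_mul, intCast_zmod_eq_zero_iff_dvd,
    Nat.cast_pow, sq, Int.mul_dvd_mul_iff_left (by exact_mod_cast NeZero.ne p)] at hb
  rwa [intCast_zmod_eq_zero_iff_dvd]

theorem exact_mulToSq_castHom :
    Exact (mulToSq p) (castHom (dvd_pow_self p two_ne_zero) (ZMod p)) := by
  intro y
  obtain ⟨k, rfl⟩ := intCast_surjective y
  rw [map_intCast, intCast_zmod_eq_zero_iff_dvd]
  constructor
  · rintro ⟨d, rfl⟩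
    exact ⟨d, by simp [mulToSq_intCast]⟩
  · rintro ⟨b, hb⟩
    obtain ⟨d, rfl⟩ := intCast_surjective b
    rw [← intCast_zmod_eq_zero_iff_dvd,
      ← map_intCast (castHom (dvd_pow_self p two_ne_zero) (ZMod p)), ← hb]
    simp [mulToSq_intCast]

end ZMod

def evenOddAddEquiv (M : Type*) [Add M] : (ℕ → M) ≃+ (ℕ → M) × (ℕ → M) where
  toEquiv := (Equiv.arrowCongr Equiv.natSumNatEquivNat.symm (.refl M)).trans
    (Equiv.sumArrowEquivProdArrow ℕ ℕ M)
  map_add' _ _ := rfl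

namespace DirectExtension

variable (p : ℕ)

local notation "𝔾" => (ℕ → ZMod p) × (ℕ → ZMod (p ^ 2))

/-- `(a, (b, g)) ↦ (f, g)`, where `f` has even part `b` and odd part `a`; the images of the two
factors are `H` and `K`. -/
def splitEquiv : (ℕ → ZMod p) × 𝔾 ≃+ 𝔾 :=
  AddEquiv.prodAssoc.symm.trans
    (AddEquiv.prodCongr (AddEquiv.prodComm.trans (evenOddAddEquiv _).symm) (.refl _))

/-- Its range is `H₀`. -/
def embedding : (ℕ → ZMod p) × (ℕ → ZMod p) →+ 𝔾 :=
  (AddMonoidHom.id _).prodMap ((evenOddAddEquiv _).symm.toAddMonoidHom.comp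
    ((AddMonoidHom.inr _ _).comp ((ZMod.mulToSq p).compLeft ℕ)))

def projection : 𝔾 →+ (ℕ → ZMod (p ^ 2)) × (ℕ → ZMod p) :=
  (((AddMonoidHom.id _).prodMap
    ((ZMod.castHom (dvd_pow_self p two_ne_zero) (ZMod p)).toAddMonoidHom.compLeft ℕ)).comp
      (evenOddAddEquiv _).toAddMonoidHom).comp (AddMonoidHom.snd _ _)

theorem embedding_apply (a b : ℕ → ZMod p) :
    embedding p (a, b) = (a, (evenOddAddEquiv _).symm (0, ZMod.mulToSq p ∘ b)) :=
  rfl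

theorem projection_apply (f : ℕ → ZMod p) (u v : ℕ → ZMod (p ^ 2)) :
    projection p (f, (evenOddAddEquiv _).symm (u, v)) =
      (u, ZMod.castHom (dvd_pow_self p two_ne_zero) (ZMod p) ∘ v) := by
  change (AddMonoidHom.id _).prodMap _ (evenOddAddEquiv _ ((evenOddAddEquiv _).symm (u, v))) = _
  rw [AddEquiv.apply_symm_apply]
  rfl

theorem embedding_injective [NeZero p] : Injective (embedding p) :=
  injective_id.prodMap ((evenOddAddEquiv _).symm.injective.comp
    (Prod.mk_right_injective 0 |>.comp (ZMod.mulToSq_injective p).comp_left))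

theorem projection_surjective : Surjective (projection p) := by
  rintro ⟨u, w⟩
  obtain ⟨v, rfl⟩ := (ZMod.castHom_surjective (dvd_pow_self p two_ne_zero)).comp_left w
  exact ⟨(0, (evenOddAddEquiv _).symm (u, v)), projection_apply p 0 u v⟩

theorem ker_projection : (projection p).ker = (embedding p).range := by
  ext ⟨f, g⟩
  obtain ⟨⟨u, v⟩, rfl⟩ := (evenOddAddEquiv _).symm.surjective g
  rw [AddMonoidHom.mem_ker, AddMonoidHom.mem_range, projection_apply]
  simp only [Prod.exists, embedding_apply, Prod.mk.injEq, Prod.mk_eq_zero,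
    EmbeddingLike.apply_eq_iff_eq]
  rw [(ZMod.exact_mulToSq_castHom p).comp_left v]
  simp [eq_comm]

theorem nsmul_eq_zero_of_mem_range_embedding {y : 𝔾} (hy : y ∈ (embedding p).range) :
    p • y = 0 := by
  obtain ⟨x, rfl⟩ := hy
  rw [← map_nsmul, show p • x = 0 by ext <;> simp [nsmul_eq_mul], map_zero]

theorem nsmul_eq_embedding :
    p • ((0 : ℕ → ZMod p), (evenOddAddEquiv _).symm (0, 1)) = embedding p (0, 1) := by
  rw [embedding_apply, Prod.smul_mk, smul_zero, ← map_nsmul, Prod.smul_mk, smul_zero]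
  congr
  funext n
  simp [ZMod.mulToSq_one]

end DirectExtension

open DirectExtension in
/-- The direct extension theorem fails for infinite groups:
in `G = (ℤ/pℤ)^ℕ × (ℤ/p²ℤ)^ℕ` there is an internal direct decomposition
`G = H·K` and a subgroup `H₀` with `H₀ ≅ H ≅ (ℤ/pℤ)^ℕ` and
`G/H₀ ≅ K ≅ G`, yet `H₀` is not a direct factor of `G`. -/
theorem direct_extension_fails_for_infinite_groups (p : ℕ) (hp : p.Prime) :
    ∃ (H K H₀ : AddSubgroup ((ℕ → ZMod p) × (ℕ → ZMod (p ^ 2)))),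
      H ⊓ K = ⊥ ∧ H ⊔ K = ⊤ ∧
      Nonempty (H ≃+ (ℕ → ZMod p)) ∧
      Nonempty (H₀ ≃+ H) ∧
      Nonempty (K ≃+ ((ℕ → ZMod p) × (ℕ → ZMod (p ^ 2)))) ∧
      Nonempty ((((ℕ → ZMod p) × (ℕ → ZMod (p ^ 2))) ⧸ H₀) ≃+ K) ∧
      ¬ ∃ K₀ : AddSubgroup ((ℕ → ZMod p) × (ℕ → ZMod (p ^ 2))),
          H₀ ⊔ K₀ = ⊤ ∧ H₀ ⊓ K₀ = ⊥ := by
  have := Fact.mk hp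
  let φ := splitEquiv p
  let eH := AddMonoidHom.ofInjective φ.injective_comp_inl
  let eK := AddMonoidHom.ofInjective φ.injective_comp_inr
  let eH₀ := AddMonoidHom.ofInjective (embedding_injective p)
  refine ⟨_, _, _, φ.range_comp_inl_inf_range_comp_inr, φ.range_comp_inl_sup_range_comp_inr,
    ⟨eH.symm⟩, ⟨eH₀.symm.trans ((evenOddAddEquiv _).symm.trans eH)⟩, ⟨eK.symm⟩,
    ⟨(QuotientAddGroup.quotientAddEquivOfEq (ker_projection p)).symm.trans
      ((QuotientAddGroup.quotientKerEquivOfSurjective _ (projection_surjective p)).trans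
        (AddEquiv.prodComm.trans eK))⟩, ?_⟩
  refine AddSubgroup.not_exists_complement_of_nsmul
    (fun _ => nsmul_eq_zero_of_mem_range_embedding p) ⟨(0, 1), (nsmul_eq_embedding p).symm⟩ ?_
  rw [nsmul_eq_embedding, map_ne_zero_iff _ (embedding_injective p)]
  simp
end

section
/- There exists a finite group G and subgroups witnessing both a split extension 1 → (Z/pZ)² → G → (Z/pZ)² → 1 and a non-split extension 1 → (Z/pZ)² → G → (Z/pZ)² → 1. Concretely, for G = (A ⋉ (B × C)) × D with A,B,C,D ≅ Z/pZ and A acting by (b,c) ↦ (b, c + kb): the normal subgroup B × C has complement A × D, but the central subgroup C × D has no complement in G. -/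
/-!
`B × C` is the kernel of the projection of the semidirect product onto `A`, so `A × D` is a
complement. The subgroup `C × D` is central with abelian quotient `B × A`. If it had a
complement `Q`, commutators of elements of `Q` would lie in `(C × D) ∩ Q = 1`, so `Q` and hence
`G = (C × D) Q` would be abelian; but a generator of `A` does not commute with a generator of
`B`, since it shifts its `C`-coordinate.
-/

open SemidirectProduct
open scoped commutatorElement

namespace Subgroup

variable {G H : Type*} [Group G] [Group H]

theorem isCompl_prod {K K' : Subgroup G} {L L' : Subgroup H} (hK : IsCompl K K')
    (hL : IsCompl L L') : IsCompl (K.prod L) (K'.prod L') := by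
  refine ⟨disjoint_def.2 fun hx hy => Prod.ext ?_ ?_, codisjoint_iff.2 (eq_top_iff.2 ?_)⟩
  · exact disjoint_def.1 hK.disjoint (mem_prod.1 hx).1 (mem_prod.1 hy).1
  · exact disjoint_def.1 hL.disjoint (mem_prod.1 hx).2 (mem_prod.1 hy).2
  have hG : (K ⊔ K').map (MonoidHom.inl G H) ≤ K.prod L ⊔ K'.prod L' := by
    rw [map_sup]
    exact sup_le_sup (map_le_iff_le_comap.2 fun g hg => mem_prod.2 ⟨hg, one_mem L⟩)
      (map_le_iff_le_comap.2 fun g hg => mem_prod.2 ⟨hg, one_mem L'⟩)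
  have hH : (L ⊔ L').map (MonoidHom.inr G H) ≤ K.prod L ⊔ K'.prod L' := by
    rw [map_sup]
    exact sup_le_sup (map_le_iff_le_comap.2 fun h hh => mem_prod.2 ⟨one_mem K, hh⟩)
      (map_le_iff_le_comap.2 fun h hh => mem_prod.2 ⟨one_mem K', hh⟩)
  rintro ⟨g, h⟩ -
  rw [← mul_one g, ← one_mul h, ← Prod.mk_mul_mk]
  exact mul_mem (hG (mem_map_of_mem _ (hK.sup_eq_top ▸ mem_top g)))
    (hH (mem_map_of_mem _ (hL.sup_eq_top ▸ mem_top h)))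

theorem commute_of_isCompl_of_le_center {Z Q : Subgroup G} (hZQ : IsCompl Z Q)
    (hZ : Z ≤ center G) (hG : _root_.commutator G ≤ Z) (g h : G) : Commute g h := by
  have : Z.Normal := ⟨fun z hz g => by rwa [mem_center_iff.1 (hZ hz) g, mul_inv_cancel_right]⟩
  have decompose (x : G) : ∃ z ∈ Z, ∃ q ∈ Q, z * q = x :=
    mem_sup_of_normal_left.1 (hZQ.sup_eq_top ▸ mem_top x)
  obtain ⟨z, hz, q, hq, rfl⟩ := decompose g
  obtain ⟨z', hz', q', hq', rfl⟩ := decompose h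
  have hqq' : Commute q q' := by
    have hmem : ⁅q, q'⁆ ∈ Z ⊓ Q :=
      ⟨hG (commutator_mem_commutator (mem_top q) (mem_top q')),
        Q.mul_mem (Q.mul_mem (Q.mul_mem hq hq') (Q.inv_mem hq)) (Q.inv_mem hq')⟩
    rw [hZQ.inf_eq_bot, mem_bot] at hmem
    exact commutatorElement_eq_one_iff_commute.1 hmem
  have central {c : G} (hc : c ∈ Z) (x : G) : Commute c x := (mem_center_iff.1 (hZ hc) x).symm
  exact (central hz _).mul_left (((central hz' q).symm).mul_right hqq')

end Subgroup

namespace SemidirectProduct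

variable {N G : Type*} [Group N] [Group G] {φ : G →* MulAut N}

theorem isCompl_range_inl_range_inr :
    IsCompl (inl : N →* N ⋊[φ] G).range (inr : G →* N ⋊[φ] G).range := by
  refine ⟨Subgroup.disjoint_def.2 ?_, codisjoint_iff.2 (eq_top_iff.2 fun x _ => ?_)⟩
  · rintro _ ⟨n, rfl⟩ ⟨g, hg⟩
    rw [show n = 1 from (congrArg left hg).symm, map_one]
  · rw [← inl_left_mul_inr_right x]
    exact mul_mem (Subgroup.mem_sup_left ⟨_, rfl⟩) (Subgroup.mem_sup_right ⟨_, rfl⟩)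

noncomputable def rangeInlProdBotEquiv (K : Type*) [Group K] :
    (inl : N →* N ⋊[φ] G).range.prod (⊥ : Subgroup K) ≃* N :=
  (Subgroup.prodEquiv _ _).trans
    (MulEquiv.prodUnique.trans (MonoidHom.ofInjective inl_injective).symm)

theorem commute_inr_inl_iff {g : G} {n : N} :
    Commute (inr g : N ⋊[φ] G) (inl n) ↔ φ g n = n := by
  simp [Commute, SemiconjBy, SemidirectProduct.ext_iff]

theorem map_inl_le_center {S : Subgroup N} (hS : S ≤ Subgroup.center N)
    (hφ : ∀ g, ∀ n ∈ S, φ g n = n) : S.map inl ≤ Subgroup.center (N ⋊[φ] G) := by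
  rintro _ ⟨n, hn, rfl⟩
  refine Subgroup.mem_center_iff.2 fun x => SemidirectProduct.ext ?_ ?_
  · simp [hφ _ n hn, Subgroup.mem_center_iff.1 (hS hn)]
  · simp

end SemidirectProduct

section

variable {B C G : Type*} [Group B] [Group C] [Group G] {φ : G →* MulAut (B × C)}

def SemidirectProduct.fstLeftRight (hφ : ∀ g x, (φ g x).1 = x.1) :
    (B × C) ⋊[φ] G →* B × G where
  toFun x := (x.left.1, x.right)
  map_one' := rfl
  map_mul' x y := by simp [hφ]

noncomputable def SemidirectProduct.mapInlBotProdTopEquiv :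
    ((⊥ : Subgroup B).prod (⊤ : Subgroup C)).map (inl (φ := φ)) ≃* C :=
  (Subgroup.equivMapOfInjective _ _ inl_injective).symm.trans
    ((Subgroup.prodEquiv _ _).trans (MulEquiv.uniqueProd.trans Subgroup.topEquiv))

variable (hφ : ∀ g x, (φ g x).1 = x.1)

theorem SemidirectProduct.fstLeftRight_surjective : Function.Surjective (fstLeftRight hφ) :=
  fun ⟨b, g⟩ => ⟨⟨(b, 1), g⟩, rfl⟩

theorem SemidirectProduct.ker_fstLeftRight :
    (fstLeftRight hφ).ker = ((⊥ : Subgroup B).prod ⊤).map inl := by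
  ext x
  constructor
  · intro hx
    have hx : (x.left.1, x.right) = (1, 1) := hx
    exact ⟨x.left, Subgroup.mem_prod.2 ⟨Subgroup.mem_bot.2 (congrArg Prod.fst hx), trivial⟩,
      SemidirectProduct.ext rfl (congrArg Prod.snd hx).symm⟩
  · rintro ⟨y, hy, rfl⟩
    exact Prod.ext (Subgroup.mem_bot.1 (Subgroup.mem_prod.1 hy).1) rfl

end

/-- In `G = (A ⋉_φ (B×C)) × D`, with `A,B,C,D ≅ ℤ/pℤ` and `A` acting by
`(b,c) ↦ (b, c + k·b)`: the normal subgroup `B×C` gives a split extension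
`1 → (ℤ/p)² → G → (ℤ/p)² → 1` (it has a complement, namely `A × D`), while
the central subgroup `C×D` gives a non-split extension with the same kernel
and quotient (it has no complement in `G`). -/
theorem split_and_nonsplit_extensions (p : ℕ) (hp : p.Prime)
    (φ : Multiplicative (ZMod p) →*
      MulAut (Multiplicative (ZMod p) × Multiplicative (ZMod p)))
    (hφ : ∀ (k b c : Multiplicative (ZMod p)),
      φ k (b, c) = (b, Multiplicative.ofAdd (c.toAdd + k.toAdd * b.toAdd))) :
    letI G := ((Multiplicative (ZMod p) × Multiplicative (ZMod p)) ⋊[φ]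
        Multiplicative (ZMod p)) × Multiplicative (ZMod p)
    letI N : Subgroup G :=
      (SemidirectProduct.inl.range).prod (⊥ : Subgroup (Multiplicative (ZMod p)))
    letI CD : Subgroup G :=
      (((⊥ : Subgroup (Multiplicative (ZMod p))).prod ⊤).map
          SemidirectProduct.inl).prod (⊤ : Subgroup (Multiplicative (ZMod p)))
    N.Normal ∧
    Nonempty (N ≃* Multiplicative (ZMod p) × Multiplicative (ZMod p)) ∧
    (∃ f : G →* Multiplicative (ZMod p) × Multiplicative (ZMod p),
      Function.Surjective f ∧ f.ker = N) ∧
    (∃ Q : Subgroup G, N ⊔ Q = ⊤ ∧ N ⊓ Q = ⊥) ∧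
    CD.Normal ∧
    Nonempty (CD ≃* Multiplicative (ZMod p) × Multiplicative (ZMod p)) ∧
    (∃ f : G →* Multiplicative (ZMod p) × Multiplicative (ZMod p),
      Function.Surjective f ∧ f.ker = CD) ∧
    ¬ ∃ Q : Subgroup G, CD ⊔ Q = ⊤ ∧ CD ⊓ Q = ⊥ := by
  have hfst (k : Multiplicative (ZMod p)) x : (φ k x).1 = x.1 := by
    rw [← Prod.mk.eta (p := x), hφ]
  let πN := (rightHom (φ := φ)).prodMap (MonoidHom.id (Multiplicative (ZMod p)))
  let πCD := (fstLeftRight hfst).comp (MonoidHom.fst _ (Multiplicative (ZMod p)))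
  have hπN : πN.ker = inl.range.prod ⊥ := by
    rw [MonoidHom.ker_prodMap, MonoidHom.ker_id, ← range_inl_eq_ker_rightHom]
  have hπCD : πCD.ker = (((⊥ : Subgroup _).prod ⊤).map inl).prod ⊤ := by
    rw [← MonoidHom.comap_ker, ker_fstLeftRight, ← Subgroup.prod_top]
  have hcompl : IsCompl ((inl (φ := φ)).range.prod (⊥ : Subgroup (Multiplicative (ZMod p))))
      ((inr.range).prod ⊤) :=
    Subgroup.isCompl_prod isCompl_range_inl_range_inr isCompl_bot_top
  have hcentral : πCD.ker ≤ Subgroup.center _ := by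
    rw [hπCD, Subgroup.center_prod, Subgroup.center_eq_top (G := Multiplicative (ZMod p))]
    refine Subgroup.prod_mono (map_inl_le_center (le_top.trans_eq Subgroup.center_eq_top.symm)
      ?_) le_rfl
    rintro k ⟨b, c⟩ ⟨rfl : b = 1, -⟩
    simp [hφ]
  refine ⟨hπN ▸ πN.normal_ker, ⟨rangeInlProdBotEquiv _⟩,
    ⟨πN, rightHom_surjective.prodMap Function.surjective_id, hπN⟩,
    ⟨_, hcompl.sup_eq_top, hcompl.inf_eq_bot⟩, hπCD ▸ πCD.normal_ker,
    ⟨(Subgroup.prodEquiv _ _).trans (mapInlBotProdTopEquiv.prodCongr Subgroup.topEquiv)⟩,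
    ⟨πCD, (fstLeftRight_surjective hfst).comp Prod.fst_surjective, hπCD⟩, ?_⟩
  rintro ⟨Q, hsup, hinf⟩
  rw [← hπCD] at hsup hinf
  have : Fact p.Prime := ⟨hp⟩
  set a := Multiplicative.ofAdd (1 : ZMod p)
  have hcomm := Subgroup.commute_of_isCompl_of_le_center
    ⟨disjoint_iff.2 hinf, codisjoint_iff.2 hsup⟩ hcentral
    (Abelianization.commutator_subset_ker πCD) (inr a, 1) (inl (a, 1), 1)
  have hfix := commute_inr_inl_iff.1 (congrArg Prod.fst hcomm)
  simp [hφ, a] at hfix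
end

section
/- Let G = (A ⋉_φ (B×C)) × D with A,B,C,D cyclic of order p and φ the action (b,c) ↦ (b, c+kb). Then C × D is contained in the center of G, G/(C×D) ≅ (Z/pZ)², and C × D has no complement in G (since G is not isomorphic to (Z/pZ)⁴). -/
/-- In `G = (A ⋉_φ (B×C)) × D`, with `A,B,C,D ≅ ℤ/pℤ` and `A` acting by
`(b,c) ↦ (b, c + k·b)`: the subgroup `C × D` is central, `G/(C×D) ≅ (ℤ/pℤ)²`,
`G` is not isomorphic to `(ℤ/pℤ)⁴`, and `C × D` has no complement in `G`. -/
theorem central_subgroup_without_complement (p : ℕ) (hp : p.Prime)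
    (φ : Multiplicative (ZMod p) →*
      MulAut (Multiplicative (ZMod p) × Multiplicative (ZMod p)))
    (hφ : ∀ (k b c : Multiplicative (ZMod p)),
      φ k (b, c) = (b, Multiplicative.ofAdd (c.toAdd + k.toAdd * b.toAdd))) :
    letI G := ((Multiplicative (ZMod p) × Multiplicative (ZMod p)) ⋊[φ]
        Multiplicative (ZMod p)) × Multiplicative (ZMod p)
    letI CD : Subgroup G :=
      (((⊥ : Subgroup (Multiplicative (ZMod p))).prod ⊤).map
          SemidirectProduct.inl).prod (⊤ : Subgroup (Multiplicative (ZMod p)))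
    CD ≤ Subgroup.center G ∧
    (∃ f : G →* Multiplicative (ZMod p) × Multiplicative (ZMod p),
      Function.Surjective f ∧ f.ker = CD) ∧
    ¬ Nonempty (G ≃* Multiplicative
        (ZMod p × ZMod p × ZMod p × ZMod p)) ∧
    ¬ ∃ Q : Subgroup G, CD ⊔ Q = ⊤ ∧ CD ⊓ Q = ⊥ := by
  haveI := Fact.mk hp
  set G := ((Multiplicative (ZMod p) × Multiplicative (ZMod p)) ⋊[φ]
      Multiplicative (ZMod p)) × Multiplicative (ZMod p) with hG
  set CD : Subgroup G :=
    (((⊥ : Subgroup (Multiplicative (ZMod p))).prod ⊤).map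
        SemidirectProduct.inl).prod (⊤ : Subgroup (Multiplicative (ZMod p))) with hCD
  -- φ fixes elements of the form (1, c)
  have hφ1 : ∀ (a c : Multiplicative (ZMod p)), φ a (1, c) = (1, c) := by
    intro a c
    have h := hφ a 1 c
    simpa using h
  -- membership in CD
  have hmemCD : ∀ g : G, g ∈ CD ↔ g.1.left.1 = 1 ∧ g.1.right = 1 := by
    intro g
    constructor
    · rintro ⟨⟨n, ⟨hn1, -⟩, hg⟩, -⟩
      refine ⟨?_, ?_⟩
      · rw [← hg, SemidirectProduct.left_inl]; exact hn1
      · rw [← hg, SemidirectProduct.right_inl]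
    · rintro ⟨h1, h2⟩
      refine ⟨⟨g.1.left, ⟨h1, trivial⟩, ?_⟩, trivial⟩
      refine SemidirectProduct.ext rfl ?_
      rw [SemidirectProduct.right_inl, h2]
  -- CD is central
  have hcentral : CD ≤ Subgroup.center G := by
    intro g hg
    obtain ⟨h1, h2⟩ := (hmemCD g).1 hg
    rw [Subgroup.mem_center_iff]
    intro b
    refine Prod.ext ?_ (mul_comm _ _)
    refine SemidirectProduct.ext ?_ (mul_comm _ _)
    show b.1.left * φ b.1.right g.1.left = g.1.left * φ g.1.right b.1.left
    have hgl : g.1.left = (1, g.1.left.2) := by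
      rw [← h1]
    rw [hgl, hφ1, h2, map_one]
    show b.1.left * (1, g.1.left.2) = (1, g.1.left.2) * b.1.left
    exact mul_comm _ _
  refine ⟨hcentral, ?_⟩
  -- the quotient hom
  let f : G →* Multiplicative (ZMod p) × Multiplicative (ZMod p) :=
  { toFun := fun g => (g.1.left.1, g.1.right)
    map_one' := rfl
    map_mul' := by
      intro x y
      refine Prod.ext ?_ rfl
      show (x.1 * y.1).left.1 = x.1.left.1 * y.1.left.1
      rw [SemidirectProduct.mul_left, Prod.fst_mul]
      congr 1
      rw [show y.1.left = (y.1.left.1, y.1.left.2) from rfl, hφ x.1.right] }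
  have hfsurj : Function.Surjective f := by
    rintro ⟨b, a⟩
    exact ⟨(⟨(b, 1), a⟩, 1), rfl⟩
  have hfker : f.ker = CD := by
    ext g
    rw [MonoidHom.mem_ker, hmemCD]
    constructor
    · intro h
      exact ⟨congrArg Prod.fst h, congrArg Prod.snd h⟩
    · rintro ⟨h1, h2⟩
      exact Prod.ext h1 h2
  -- noncommutativity witness
  have hone : (Multiplicative.ofAdd (1 : ZMod p)) ≠ 1 := by
    intro h
    have : (1 : ZMod p) = 0 := by
      have := congrArg Multiplicative.toAdd h
      simpa using this
    exact one_ne_zero this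
  set u : Multiplicative (ZMod p) := Multiplicative.ofAdd (1 : ZMod p) with hu
  have hnc : ∃ x y : G, x * y ≠ y * x := by
    refine ⟨(⟨1, u⟩, 1), (⟨(u, 1), 1⟩, 1), ?_⟩
    intro h
    have h1 : ((⟨1, u⟩, 1) * (⟨(u, 1), 1⟩, 1) : G).1.left.2
        = ((⟨(u, 1), 1⟩, 1) * (⟨1, u⟩, 1) : G).1.left.2 := by rw [h]
    have hl : ((⟨1, u⟩, 1) * (⟨(u, 1), 1⟩, 1) : G).1.left = φ u (u, 1) := by
      show (1 : _ × _) * φ u (u, 1) = φ u (u, 1)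
      rw [one_mul]
    have hr : ((⟨(u, 1), 1⟩, 1) * (⟨1, u⟩, 1) : G).1.left = (u, 1) := by
      show (u, 1) * φ (1 : Multiplicative (ZMod p)) 1 = (u, 1)
      rw [map_one]
      show (u, 1) * (1 : _ × _) = (u, 1)
      rw [mul_one]
    rw [hl, hr, hφ] at h1
    apply hone
    simpa [hu] using h1
  obtain ⟨x₀, y₀, hxy⟩ := hnc
  refine ⟨⟨f, hfsurj, hfker⟩, ?_, ?_⟩
  · rintro ⟨e⟩
    apply hxy
    apply e.injective
    rw [map_mul, map_mul, mul_comm]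
  · rintro ⟨Q, hsup, hinf⟩
    haveI : CD.Normal := by
      constructor
      intro n hn g
      have hc : g * n * g⁻¹ = n := by
        rw [Subgroup.mem_center_iff.1 (hcentral hn) g, mul_inv_cancel_right]
      rw [hc]; exact hn
    -- every element decomposes
    have hdecomp : ∀ g : G, ∃ c ∈ CD, ∃ q ∈ Q, g = c * q := by
      intro g
      have : g ∈ (↑(CD ⊔ Q) : Set G) := by rw [hsup]; trivial
      rw [Subgroup.normal_mul] at this
      obtain ⟨c, hc, q, hq, hcq⟩ := this
      exact ⟨c, hc, q, hq, hcq.symm⟩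
    -- elements of Q commute
    have hQcomm : ∀ q₁ ∈ Q, ∀ q₂ ∈ Q, q₁ * q₂ = q₂ * q₁ := by
      intro q₁ hq₁ q₂ hq₂
      have hker : q₁ * q₂ * (q₂ * q₁)⁻¹ ∈ f.ker := by
        rw [MonoidHom.mem_ker, map_mul, map_inv, map_mul, map_mul, mul_comm (f q₁)]
        group
      have hQm : q₁ * q₂ * (q₂ * q₁)⁻¹ ∈ Q := by
        exact mul_mem (mul_mem hq₁ hq₂) (inv_mem (mul_mem hq₂ hq₁))
      have : q₁ * q₂ * (q₂ * q₁)⁻¹ ∈ CD ⊓ Q := ⟨hfker ▸ hker, hQm⟩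
      rw [hinf, Subgroup.mem_bot] at this
      exact mul_inv_eq_one.1 this
    apply hxy
    obtain ⟨c₁, hc₁, q₁, hq₁, rfl⟩ := hdecomp x₀
    obtain ⟨c₂, hc₂, q₂, hq₂, rfl⟩ := hdecomp y₀
    have z₁ := Subgroup.mem_center_iff.1 (hcentral hc₁)
    have z₂ := Subgroup.mem_center_iff.1 (hcentral hc₂)
    have e1 : c₁ * q₁ * (c₂ * q₂) = c₁ * (c₂ * (q₁ * q₂)) := by
      rw [mul_assoc, ← mul_assoc q₁, z₂ q₁, mul_assoc]
    have e2 : c₂ * q₂ * (c₁ * q₁) = c₁ * (c₂ * (q₂ * q₁)) := by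
      rw [mul_assoc, ← mul_assoc q₂, z₁ q₂, mul_assoc, ← mul_assoc, z₁ c₂, mul_assoc]
    rw [e1, e2, hQcomm q₁ hq₁ q₂ hq₂]
end
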